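/- arXiv:1903.02228 — 4 statements merged into one kernel-verified Lean document; each statement's English description precedes it below -/
import Mathlib

section
/- If μ > 0, σ > 0, θ + 1 > 0 and θ − λ + 1/2 > 0, then the standardized mean ratio μ·Σ_{i=1}^{n} i^θ / ( σ·√(Σ_{i=1}^{n} i^{2λ}) ) tends to +∞ as n → ∞. -/
open Filter

private lemma icc_sum_eq_range (g : ℕ → ℝ) (n : ℕ) :
    ∑ i ∈ Finset.Icc 1 n, g i = ∑ i ∈ Finset.range n, g (1 + i) := by
  rw [← Finset.Ico_add_one_right_eq_Icc, Finset.sum_Ico_eq_sum_range]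
  simp

private lemma tele_upper {r : ℝ} (hr : 0 ≤ r) {x : ℝ} (hx : 1 ≤ x) :
    x ^ (r + 1) - (x - 1) ^ (r + 1) ≤ (r + 1) * x ^ r := by
  have hx0 : (0 : ℝ) < x := lt_of_lt_of_le one_pos hx
  have h1x : 1 / x ≤ 1 := by rw [div_le_one hx0]; exact hx
  have hs : (-1 : ℝ) ≤ -(1 / x) := by linarith
  have hb := one_add_mul_self_le_rpow_one_add hs (by linarith : (1 : ℝ) ≤ r + 1)
  have h1 : (1 : ℝ) + -(1 / x) = (x - 1) / x := by field_simp; ring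
  rw [h1] at hb
  have hxx : (0 : ℝ) ≤ x - 1 := by linarith
  rw [Real.div_rpow hxx hx0.le] at hb
  have hxp : (0 : ℝ) < x ^ (r + 1) := Real.rpow_pos_of_pos hx0 _
  have hb2 := mul_le_mul_of_nonneg_left hb hxp.le
  have hcan : x ^ (r + 1) * ((x - 1) ^ (r + 1) / x ^ (r + 1)) = (x - 1) ^ (r + 1) := by
    rw [mul_comm, div_mul_cancel₀ _ hxp.ne']
  rw [hcan] at hb2
  have hxr : x ^ (r + 1) / x = x ^ r := by
    have h := Real.rpow_sub hx0 (r + 1) 1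
    rw [Real.rpow_one] at h
    simpa using h.symm
  have expand : x ^ (r + 1) * (1 + (r + 1) * -(1 / x))
      = x ^ (r + 1) - (r + 1) * (x ^ (r + 1) / x) := by ring
  rw [expand, hxr] at hb2
  linarith

private lemma tele_lower {r : ℝ} (hr : -1 < r) (hr0 : r ≤ 0) {x : ℝ} (hx : 1 ≤ x) :
    (r + 1) * x ^ r ≤ x ^ (r + 1) - (x - 1) ^ (r + 1) := by
  have hx0 : (0 : ℝ) < x := lt_of_lt_of_le one_pos hx
  have h1x : 1 / x ≤ 1 := by rw [div_le_one hx0]; exact hx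
  have hs : (-1 : ℝ) ≤ -(1 / x) := by linarith
  have hb := rpow_one_add_le_one_add_mul_self hs
    (by linarith : (0 : ℝ) ≤ r + 1) (by linarith : r + 1 ≤ 1)
  have h1 : (1 : ℝ) + -(1 / x) = (x - 1) / x := by field_simp; ring
  rw [h1] at hb
  have hxx : (0 : ℝ) ≤ x - 1 := by linarith
  rw [Real.div_rpow hxx hx0.le] at hb
  have hxp : (0 : ℝ) < x ^ (r + 1) := Real.rpow_pos_of_pos hx0 _
  have hb2 := mul_le_mul_of_nonneg_left hb hxp.le
  have hcan : x ^ (r + 1) * ((x - 1) ^ (r + 1) / x ^ (r + 1)) = (x - 1) ^ (r + 1) := by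
    rw [mul_comm, div_mul_cancel₀ _ hxp.ne']
  rw [hcan] at hb2
  have hxr : x ^ (r + 1) / x = x ^ r := by
    have h := Real.rpow_sub hx0 (r + 1) 1
    rw [Real.rpow_one] at h
    simpa using h.symm
  have expand : x ^ (r + 1) * (1 + (r + 1) * -(1 / x))
      = x ^ (r + 1) - (r + 1) * (x ^ (r + 1) / x) := by ring
  rw [expand, hxr] at hb2
  linarith

/-- Telescoping upper bound: `∑_{i=1}^n i^r ≤ max 1 (1/(r+1)) * n^(r+1)` for `r > -1`. -/
private lemma sum_rpow_upper {r : ℝ} (hr : -1 < r) (n : ℕ) :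
    ∑ i ∈ Finset.Icc 1 n, (i : ℝ) ^ r ≤ max 1 (1 / (r + 1)) * (n : ℝ) ^ (r + 1) := by
  have hr1 : (0 : ℝ) < r + 1 := by linarith
  rcases Nat.eq_zero_or_pos n with rfl | hn
  · simp [Real.zero_rpow hr1.ne']
  have hn0 : (0 : ℝ) < (n : ℝ) := by exact_mod_cast hn
  rcases le_or_gt 0 r with hr0 | hr0
  · -- each term ≤ n^r
    have hbound : ∑ i ∈ Finset.Icc 1 n, (i : ℝ) ^ r ≤ ∑ _i ∈ Finset.Icc 1 n, (n : ℝ) ^ r := by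
      apply Finset.sum_le_sum
      intro i hi
      have hi' := (Finset.mem_Icc.mp hi).2
      exact Real.rpow_le_rpow (Nat.cast_nonneg i) (by exact_mod_cast hi') hr0
    have hcard : ∑ _i ∈ Finset.Icc 1 n, (n : ℝ) ^ r = (n : ℝ) * (n : ℝ) ^ r := by
      rw [Finset.sum_const, Nat.card_Icc]
      simp [nsmul_eq_mul]
    have hmul : (n : ℝ) * (n : ℝ) ^ r = (n : ℝ) ^ (r + 1) := by
      rw [Real.rpow_add hn0, Real.rpow_one]; ring
    calc ∑ i ∈ Finset.Icc 1 n, (i : ℝ) ^ r ≤ (n : ℝ) ^ (r + 1) := by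
          rw [← hmul, ← hcard]; exact hbound
      _ ≤ max 1 (1 / (r + 1)) * (n : ℝ) ^ (r + 1) := by
          nlinarith [Real.rpow_pos_of_pos hn0 (r + 1), le_max_left (1 : ℝ) (1 / (r + 1))]
  · -- telescoping
    have key : (r + 1) * ∑ i ∈ Finset.Icc 1 n, (i : ℝ) ^ r ≤ (n : ℝ) ^ (r + 1) := by
      rw [Finset.mul_sum, icc_sum_eq_range (fun i => (r + 1) * (i : ℝ) ^ r) n]
      have htel : ∑ i ∈ Finset.range n,
          (((1 + i : ℕ) : ℝ) ^ (r + 1) - ((i : ℕ) : ℝ) ^ (r + 1)) = (n : ℝ) ^ (r + 1) := by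
        have := Finset.sum_range_sub (fun i : ℕ => ((i : ℕ) : ℝ) ^ (r + 1)) n
        simpa [Real.zero_rpow hr1.ne', add_comm] using this
      rw [← htel]
      apply Finset.sum_le_sum
      intro i _
      have hx : (1 : ℝ) ≤ ((1 + i : ℕ) : ℝ) := by push_cast; linarith [Nat.cast_nonneg (α := ℝ) i]
      have h := tele_lower hr hr0.le hx
      have hsub : ((1 + i : ℕ) : ℝ) - 1 = (i : ℝ) := by push_cast; ring
      rw [hsub] at h
      exact h
    have h1 : ∑ i ∈ Finset.Icc 1 n, (i : ℝ) ^ r ≤ 1 / (r + 1) * (n : ℝ) ^ (r + 1) := by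
      rw [div_mul_eq_mul_div, one_mul, le_div_iff₀ hr1, mul_comm]
      exact key
    calc ∑ i ∈ Finset.Icc 1 n, (i : ℝ) ^ r ≤ 1 / (r + 1) * (n : ℝ) ^ (r + 1) := h1
      _ ≤ max 1 (1 / (r + 1)) * (n : ℝ) ^ (r + 1) := by
          apply mul_le_mul_of_nonneg_right (le_max_right _ _) (Real.rpow_pos_of_pos hn0 _).le

/-- Telescoping lower bound: `min 1 (1/(r+1)) * n^(r+1) ≤ ∑_{i=1}^n i^r` for `r > -1`. -/
private lemma sum_rpow_lower {r : ℝ} (hr : -1 < r) (n : ℕ) :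
    min 1 (1 / (r + 1)) * (n : ℝ) ^ (r + 1) ≤ ∑ i ∈ Finset.Icc 1 n, (i : ℝ) ^ r := by
  have hr1 : (0 : ℝ) < r + 1 := by linarith
  rcases Nat.eq_zero_or_pos n with rfl | hn
  · simp [Real.zero_rpow hr1.ne']
  have hn0 : (0 : ℝ) < (n : ℝ) := by exact_mod_cast hn
  rcases le_or_gt 0 r with hr0 | hr0
  · -- telescoping
    have key : (n : ℝ) ^ (r + 1) ≤ (r + 1) * ∑ i ∈ Finset.Icc 1 n, (i : ℝ) ^ r := by
      rw [Finset.mul_sum, icc_sum_eq_range (fun i => (r + 1) * (i : ℝ) ^ r) n]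
      have htel : ∑ i ∈ Finset.range n,
          (((1 + i : ℕ) : ℝ) ^ (r + 1) - ((i : ℕ) : ℝ) ^ (r + 1)) = (n : ℝ) ^ (r + 1) := by
        have := Finset.sum_range_sub (fun i : ℕ => ((i : ℕ) : ℝ) ^ (r + 1)) n
        simpa [Real.zero_rpow hr1.ne', add_comm] using this
      rw [← htel]
      apply Finset.sum_le_sum
      intro i _
      have hx : (1 : ℝ) ≤ ((1 + i : ℕ) : ℝ) := by push_cast; linarith [Nat.cast_nonneg (α := ℝ) i]
      have h := tele_upper hr0 hx
      have hsub : ((1 + i : ℕ) : ℝ) - 1 = (i : ℝ) := by push_cast; ring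
      rw [hsub] at h
      exact h
    have h1 : 1 / (r + 1) * (n : ℝ) ^ (r + 1) ≤ ∑ i ∈ Finset.Icc 1 n, (i : ℝ) ^ r := by
      rw [div_mul_eq_mul_div, one_mul, div_le_iff₀ hr1, mul_comm]
      exact key
    calc min 1 (1 / (r + 1)) * (n : ℝ) ^ (r + 1)
        ≤ 1 / (r + 1) * (n : ℝ) ^ (r + 1) := by
          apply mul_le_mul_of_nonneg_right (min_le_right _ _) (Real.rpow_pos_of_pos hn0 _).le
      _ ≤ ∑ i ∈ Finset.Icc 1 n, (i : ℝ) ^ r := h1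
  · -- each term ≥ n^r
    have hbound : ∑ _i ∈ Finset.Icc 1 n, (n : ℝ) ^ r ≤ ∑ i ∈ Finset.Icc 1 n, (i : ℝ) ^ r := by
      apply Finset.sum_le_sum
      intro i hi
      obtain ⟨hi1, hi2⟩ := Finset.mem_Icc.mp hi
      have hi0 : (0 : ℝ) < (i : ℝ) := by exact_mod_cast hi1
      exact Real.rpow_le_rpow_of_nonpos hi0 (by exact_mod_cast hi2) hr0.le
    have hcard : ∑ _i ∈ Finset.Icc 1 n, (n : ℝ) ^ r = (n : ℝ) * (n : ℝ) ^ r := by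
      rw [Finset.sum_const, Nat.card_Icc]
      simp [nsmul_eq_mul]
    have hmul : (n : ℝ) * (n : ℝ) ^ r = (n : ℝ) ^ (r + 1) := by
      rw [Real.rpow_add hn0, Real.rpow_one]; ring
    calc min 1 (1 / (r + 1)) * (n : ℝ) ^ (r + 1)
        ≤ (n : ℝ) ^ (r + 1) := by
          nlinarith [Real.rpow_pos_of_pos hn0 (r + 1), min_le_left (1 : ℝ) (1 / (r + 1))]
      _ = (n : ℝ) * (n : ℝ) ^ r := hmul.symm
      _ ≤ ∑ i ∈ Finset.Icc 1 n, (i : ℝ) ^ r := by rw [← hcard]; exact hbound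

/-- If `μ > 0`, `σ > 0`, `θ + 1 > 0` and `θ - λ + 1/2 > 0`, then the
standardized mean ratio `μ ∑_{i=1}^n i^θ / (σ √(∑_{i=1}^n i^(2λ)))` tends to `+∞`. -/
theorem standardized_mean_ratio_tendsto_atTop
    (μ σ θ lam : ℝ) (hμ : 0 < μ) (hσ : 0 < σ)
    (hθ : 0 < θ + 1) (hθlam : 0 < θ - lam + 1 / 2) :
    Tendsto (fun n : ℕ =>
        μ * (∑ i ∈ Finset.Icc 1 n, (i : ℝ) ^ θ) /
          (σ * Real.sqrt (∑ i ∈ Finset.Icc 1 n, (i : ℝ) ^ (2 * lam))))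
      atTop atTop := by
  set ν : ℝ := max lam (θ / 2) with hν
  have hν1 : -1 < 2 * ν := by
    have : θ / 2 ≤ ν := le_max_right _ _
    linarith
  have hν2 : 0 < θ - ν + 1 / 2 := by
    have : ν < θ + 1 / 2 := max_lt (by linarith) (by linarith)
    linarith
  set c : ℝ := min 1 (1 / (θ + 1)) with hc
  have hcpos : 0 < c := lt_min one_pos (by positivity)
  set C : ℝ := max 1 (1 / (2 * ν + 1)) with hC
  have hCpos : 0 < C := lt_of_lt_of_le one_pos (le_max_left _ _)
  set K : ℝ := μ * c / (σ * Real.sqrt C) with hK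
  have hsC : 0 < Real.sqrt C := Real.sqrt_pos.mpr hCpos
  have hKpos : 0 < K := by positivity
  set e : ℝ := θ - ν + 1 / 2 with he
  have hg : Tendsto (fun n : ℕ => K * (n : ℝ) ^ e) atTop atTop := by
    apply Tendsto.const_mul_atTop hKpos
    exact (tendsto_rpow_atTop hν2).comp tendsto_natCast_atTop_atTop
  apply tendsto_atTop_mono' atTop _ hg
  filter_upwards [eventually_ge_atTop 1] with n hn
  have hn0 : (0 : ℝ) < (n : ℝ) := by exact_mod_cast hn
  have hn1 : (1 : ℝ) ≤ (n : ℝ) := by exact_mod_cast hn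
  -- numerator lower bound
  have hnum : c * (n : ℝ) ^ (θ + 1) ≤ ∑ i ∈ Finset.Icc 1 n, (i : ℝ) ^ θ :=
    sum_rpow_lower (by linarith) n
  -- denominator upper bound
  have hden1 : ∑ i ∈ Finset.Icc 1 n, (i : ℝ) ^ (2 * lam)
      ≤ ∑ i ∈ Finset.Icc 1 n, (i : ℝ) ^ (2 * ν) := by
    apply Finset.sum_le_sum
    intro i hi
    have hi1 : 1 ≤ i := (Finset.mem_Icc.mp hi).1
    have : (1 : ℝ) ≤ (i : ℝ) := by exact_mod_cast hi1
    exact Real.rpow_le_rpow_of_exponent_le this (by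
      have : lam ≤ ν := le_max_left _ _
      linarith)
  have hden2 : ∑ i ∈ Finset.Icc 1 n, (i : ℝ) ^ (2 * ν) ≤ C * (n : ℝ) ^ (2 * ν + 1) :=
    sum_rpow_upper hν1 n
  have hdenpos : 0 < ∑ i ∈ Finset.Icc 1 n, (i : ℝ) ^ (2 * lam) := by
    apply Finset.sum_pos
    · intro i hi
      have hi1 : 1 ≤ i := (Finset.mem_Icc.mp hi).1
      exact Real.rpow_pos_of_pos (by exact_mod_cast hi1) _
    · exact ⟨1, Finset.mem_Icc.mpr ⟨le_refl 1, hn⟩⟩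
  -- sqrt of denominator bound
  have hsqrt : Real.sqrt (∑ i ∈ Finset.Icc 1 n, (i : ℝ) ^ (2 * lam))
      ≤ Real.sqrt C * (n : ℝ) ^ (ν + 1 / 2) := by
    have h1 : Real.sqrt (∑ i ∈ Finset.Icc 1 n, (i : ℝ) ^ (2 * lam))
        ≤ Real.sqrt (C * (n : ℝ) ^ (2 * ν + 1)) :=
      Real.sqrt_le_sqrt (le_trans hden1 hden2)
    have h2 : Real.sqrt (C * (n : ℝ) ^ (2 * ν + 1))
        = Real.sqrt C * (n : ℝ) ^ (ν + 1 / 2) := by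
      rw [Real.sqrt_mul hCpos.le]
      congr 1
      rw [Real.sqrt_eq_rpow, ← Real.rpow_mul hn0.le]
      congr 1
      ring
    rw [h2] at h1
    exact h1
  -- combine
  have hKe : K * (n : ℝ) ^ e
      = μ * (c * (n : ℝ) ^ (θ + 1)) / (σ * (Real.sqrt C * (n : ℝ) ^ (ν + 1 / 2))) := by
    have hsplit : (n : ℝ) ^ e = (n : ℝ) ^ (θ + 1) / (n : ℝ) ^ (ν + 1 / 2) := by
      rw [← Real.rpow_sub hn0]
      congr 1
      ring
    rw [hsplit, hK]
    have h1 : (n : ℝ) ^ (ν + 1 / 2) ≠ 0 := (Real.rpow_pos_of_pos hn0 _).ne'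
    field_simp
  rw [hKe]
  apply div_le_div₀
  · positivity
  · exact mul_le_mul_of_nonneg_left hnum hμ.le
  · positivity
  · exact mul_le_mul_of_nonneg_left hsqrt hσ.le
end

section
/- Let X be a real Gaussian random variable with mean m and variance s² > 0, and suppose P(X < 0) > 0. Then the variance of X under the conditional distribution given the event {X < 0} is at most s², i.e. one-sided truncation does not increase the variance of a Gaussian. -/
open MeasureTheory ProbabilityTheory
open scoped NNReal

open Real Filter Set
open scoped Topology ENNReal

-- FTC on Iio
lemma my_integral_Iio_of_hasDerivAt_of_tendsto {f f' : ℝ → ℝ} {a l : ℝ}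
    (hderiv : ∀ x, HasDerivAt f (f' x) x)
    (f'int : IntegrableOn f' (Iio a)) (hf : Tendsto f atBot (𝓝 l)) :
    ∫ x in Iio a, f' x = f a - l := by
  have hme : MeasurableEmbedding (fun x : ℝ => -x) :=
    (Homeomorph.neg ℝ).isClosedEmbedding.measurableEmbedding
  have key : ∫ x in Ioi (-a), (fun y => -f' (-y)) x = l - f (-(-a)) := by
    refine integral_Ioi_of_hasDerivAt_of_tendsto' (f := fun y => f (-y)) ?_ ?_ ?_
    · intro x _
      simpa [Function.comp_def] using ((hderiv (-x)).comp x (hasDerivAt_neg x))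
    · have : IntegrableOn (fun y => f' (-y)) (Ioi (-a)) := by
        have := f'int
        rw [← Measure.map_neg_eq_self (volume : Measure ℝ)] at this
        rw [hme.integrableOn_map_iff] at this
        simpa [Function.comp_def, neg_Iio] using this
      exact this.neg
    · exact hf.comp tendsto_neg_atTop_atBot
  rw [neg_neg] at key
  have h2 : ∫ x in Ioi (-a), (fun y => -f' (-y)) x = - ∫ x in Ioi (-a), f' (-x) := by
    simp [integral_neg]
  rw [h2] at key
  have h3 : ∫ x in Ioi (-a), f' (-x) = ∫ x in Iic a, f' x := by
    simpa using integral_comp_neg_Ioi (-a) f'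
  rw [h3] at key
  rw [← integral_Iic_eq_integral_Iio]
  linarith

section pdf
variable {m : ℝ} {v : ℝ≥0}

lemma my_hasDerivAt_pdf (hv : v ≠ 0) (x : ℝ) :
    HasDerivAt (gaussianPDFReal m v) ((m - x) / v * gaussianPDFReal m v x) x := by
  have hv' : (v : ℝ) ≠ 0 := by exact_mod_cast hv
  have h1 : HasDerivAt (fun y : ℝ => -(y - m) ^ 2 / (2 * (v : ℝ))) ((m - x) / v) x := by
    have h0 : HasDerivAt (fun y : ℝ => (y - m)) 1 x := (hasDerivAt_id x).sub_const m
    have h2 : HasDerivAt (fun y : ℝ => (y - m) ^ 2) (2 * (x - m)) x := by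
      simpa [Pi.pow_def] using h0.pow 2
    have h3 := (h2.neg).div_const (2 * (v : ℝ))
    exact h3.congr_deriv (by field_simp; ring)
  have h4 := (h1.exp).const_mul (√(2 * π * v))⁻¹
  have : gaussianPDFReal m v = fun y => (√(2 * π * v))⁻¹ * rexp (-(y - m) ^ 2 / (2 * v)) :=
    gaussianPDFReal_def m v
  rw [this]
  exact h4.congr_deriv (by beta_reduce; ring)

lemma my_tendsto_sq_div_atBot (hv : v ≠ 0) :
    Tendsto (fun x : ℝ => -(x - m) ^ 2 / (2 * (v : ℝ))) atBot atBot := by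
  have hv' : (0 : ℝ) < v := by positivity
  have h1 : Tendsto (fun x : ℝ => x - m) atBot atBot := tendsto_atBot_add_const_right _ _ tendsto_id
  have h2 : Tendsto (fun x : ℝ => (x - m) ^ 2) atBot atTop := by
    have := h1.atBot_mul_atBot₀ h1
    simpa [pow_two] using this
  have h3 : Tendsto (fun x : ℝ => -(x - m) ^ 2) atBot atBot := tendsto_neg_atTop_atBot.comp h2
  have h4 := h3.atBot_div_const (by positivity : (0:ℝ) < 2 * (v:ℝ))
  exact h4

lemma my_tendsto_pdf_atBot (hv : v ≠ 0) :
    Tendsto (gaussianPDFReal m v) atBot (𝓝 0) := by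
  rw [gaussianPDFReal_def]
  have h := Real.tendsto_exp_atBot.comp (my_tendsto_sq_div_atBot (m := m) hv)
  have := h.const_mul (√(2 * π * v))⁻¹
  simpa [Function.comp_def] using this

lemma my_tendsto_mul_pdf_atBot (hv : v ≠ 0) :
    Tendsto (fun x => (x - m) * gaussianPDFReal m v x) atBot (𝓝 0) := by
  have hb : (0:ℝ) < (2 * (v:ℝ))⁻¹ := by positivity
  -- atTop version : y * exp(-b y^2) → 0
  have hlo := rpow_mul_exp_neg_mul_sq_isLittleO_exp_neg hb 1
  have htop : Tendsto (fun y : ℝ => y * rexp (-(2 * (v:ℝ))⁻¹ * y ^ 2)) atTop (𝓝 0) := by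
    have hg : Tendsto (fun x : ℝ => rexp (-(1 / 2) * x)) atTop (𝓝 0) := by
      have : Tendsto (fun x : ℝ => -(1 / 2) * x) atTop atBot := by
        apply Tendsto.const_mul_atTop_of_neg (by norm_num) tendsto_id
      exact Real.tendsto_exp_atBot.comp this
    have := hlo.isBigO.trans_tendsto hg
    simpa [Real.rpow_one, Function.comp_def] using this
  have hbot : Tendsto (fun y : ℝ => y * rexp (-(2 * (v:ℝ))⁻¹ * y ^ 2)) atBot (𝓝 0) := by
    have h1 := (htop.comp tendsto_neg_atBot_atTop).neg
    simp only [Function.comp_def, neg_neg, neg_mul, neg_zero] at h1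
    simpa using h1
  have h2 := (hbot.comp (tendsto_atBot_add_const_right atBot (-m) tendsto_id)).const_mul
      (√(2 * π * v))⁻¹
  simp only [Function.comp_def, mul_zero] at h2
  refine h2.congr fun x => ?_
  simp only [gaussianPDFReal, id_eq]
  rw [show x + -m = x - m by ring]
  rw [show -(2 * (v:ℝ))⁻¹ * (x - m) ^ 2 = -(x - m) ^ 2 / (2 * (v:ℝ)) by ring]
  ring

end pdf

section integ
variable {m : ℝ} {v : ℝ≥0}

lemma my_pdf_eq (hv : v ≠ 0) (x : ℝ) :
    gaussianPDFReal m v x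
      = (√(2 * π * v))⁻¹ * rexp (-(2 * (v : ℝ))⁻¹ * (x - m) ^ 2) := by
  simp only [gaussianPDFReal]
  congr 1
  rw [show -(2 * (v:ℝ))⁻¹ * (x - m) ^ 2 = -(x - m) ^ 2 / (2 * (v:ℝ)) by ring]

lemma my_integrable_mul_pdf (hv : v ≠ 0) :
    Integrable (fun x => (x - m) * gaussianPDFReal m v x) := by
  have hb : (0:ℝ) < (2 * (v:ℝ))⁻¹ := by positivity
  have h := ((integrable_mul_exp_neg_mul_sq hb).const_mul (√(2 * π * v))⁻¹).comp_sub_right m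
  refine h.congr ?_
  filter_upwards with x
  rw [my_pdf_eq hv]
  ring

lemma my_integrable_sq_mul_pdf (hv : v ≠ 0) :
    Integrable (fun x => (x - m) ^ 2 * gaussianPDFReal m v x) := by
  have hb : (0:ℝ) < (2 * (v:ℝ))⁻¹ := by positivity
  have h0 := integrable_rpow_mul_exp_neg_mul_sq hb (s := 2) (by norm_num)
  have h1 : Integrable (fun x : ℝ => x ^ 2 * rexp (-(2 * (v:ℝ))⁻¹ * x ^ 2)) := by
    refine h0.congr ?_
    filter_upwards with x
    rw [show ((2:ℝ) : ℝ) = ((2:ℕ) : ℝ) by norm_num, Real.rpow_natCast]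
  have h := (h1.const_mul (√(2 * π * v))⁻¹).comp_sub_right m
  refine h.congr ?_
  filter_upwards with x
  rw [my_pdf_eq hv]
  ring

lemma my_integral_A (hv : v ≠ 0) :
    ∫ x in Iio 0, (x - m) * gaussianPDFReal m v x
      = -(v : ℝ) * gaussianPDFReal m v 0 := by
  have hv' : (v : ℝ) ≠ 0 := by exact_mod_cast hv
  have hderiv : ∀ x : ℝ, HasDerivAt (fun y => -(v : ℝ) * gaussianPDFReal m v y)
      ((x - m) * gaussianPDFReal m v x) x := by
    intro x
    have h2 := (my_hasDerivAt_pdf (m := m) hv x).const_mul (-(v : ℝ))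
    set p := gaussianPDFReal m v x
    exact h2.congr_deriv (by field_simp; ring)
  have hint : IntegrableOn (fun x => (x - m) * gaussianPDFReal m v x) (Iio 0) :=
    (my_integrable_mul_pdf hv).integrableOn
  have htend : Tendsto (fun x => -(v : ℝ) * gaussianPDFReal m v x) atBot (𝓝 0) := by
    simpa using (my_tendsto_pdf_atBot (m := m) hv).const_mul (-(v : ℝ))
  have key := my_integral_Iio_of_hasDerivAt_of_tendsto hderiv hint htend
  rw [key]
  ring

lemma my_integral_B (hv : v ≠ 0) :
    ∫ x in Iio 0, ((x - m) ^ 2 * gaussianPDFReal m v x - (v : ℝ) * gaussianPDFReal m v x)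
      = (v : ℝ) * m * gaussianPDFReal m v 0 := by
  have hv' : (v : ℝ) ≠ 0 := by exact_mod_cast hv
  have hderiv : ∀ x : ℝ, HasDerivAt (fun y => -(v : ℝ) * (y - m) * gaussianPDFReal m v y)
      ((x - m) ^ 2 * gaussianPDFReal m v x - (v : ℝ) * gaussianPDFReal m v x) x := by
    intro x
    have h1 : HasDerivAt (fun y : ℝ => -(v : ℝ) * (y - m)) (-(v : ℝ)) x := by
      simpa using ((hasDerivAt_id x).sub_const m).const_mul (-(v : ℝ))
    have h2 := h1.mul (my_hasDerivAt_pdf (m := m) hv x)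
    set p := gaussianPDFReal m v x
    exact h2.congr_deriv (by field_simp; ring)
  have hint : IntegrableOn
      (fun x => (x - m) ^ 2 * gaussianPDFReal m v x - (v : ℝ) * gaussianPDFReal m v x)
      (Iio 0) :=
    ((my_integrable_sq_mul_pdf hv).sub
      ((integrable_gaussianPDFReal m v).const_mul _)).integrableOn
  have htend : Tendsto (fun x => -(v : ℝ) * (x - m) * gaussianPDFReal m v x) atBot (𝓝 0) := by
    have := (my_tendsto_mul_pdf_atBot (m := m) hv).const_mul (-(v : ℝ))
    simp only [mul_zero] at this
    refine this.congr fun x => by ring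
  have key := my_integral_Iio_of_hasDerivAt_of_tendsto hderiv hint htend
  rw [key]
  ring

end integ

section bridge
variable {m : ℝ} {v : ℝ≥0}

lemma my_pdf_toNNReal (hv : v ≠ 0) :
    gaussianPDF m v = fun x => ((gaussianPDFReal m v x).toNNReal : ℝ≥0∞) := rfl

lemma my_setIntegral_gaussianReal (hv : v ≠ 0) (g : ℝ → ℝ) :
    ∫ x in Iio 0, g x ∂(gaussianReal m v)
      = ∫ x in Iio 0, g x * gaussianPDFReal m v x := by
  rw [gaussianReal_of_var_ne_zero _ hv, my_pdf_toNNReal hv,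
    restrict_withDensity measurableSet_Iio,
    integral_withDensity_eq_integral_smul ((measurable_gaussianPDFReal m v).real_toNNReal) g]
  refine setIntegral_congr_fun measurableSet_Iio fun x _ => ?_
  rw [NNReal.smul_def, Real.coe_toNNReal _ (gaussianPDFReal_nonneg m v x), smul_eq_mul]
  ring

lemma my_integrable_gaussianReal (hv : v ≠ 0) {g : ℝ → ℝ} (hg : Measurable g)
    (h : Integrable (fun x => g x * gaussianPDFReal m v x)) :
    Integrable g (gaussianReal m v) := by
  rw [gaussianReal_of_var_ne_zero _ hv]
  rw [integrable_withDensity_iff (measurable_gaussianPDF m v)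
    (ae_of_all _ fun x => ENNReal.ofReal_lt_top)]
  refine h.congr ?_
  filter_upwards with x
  rw [gaussianPDF, ENNReal.toReal_ofReal (gaussianPDFReal_nonneg m v x)]

lemma my_memℒp_two (hv : v ≠ 0) : MemLp id 2 (gaussianReal m v) := by
  rw [memLp_two_iff_integrable_sq aestronglyMeasurable_id]
  refine my_integrable_gaussianReal hv (by measurability) ?_
  have h2 := my_integrable_sq_mul_pdf (m := m) hv
  have h1 := my_integrable_mul_pdf (m := m) hv
  have h0 := integrable_gaussianPDFReal m v
  have := (h2.add ((h1.const_mul (2 * m)))).add (h0.const_mul (m ^ 2))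
  refine this.congr ?_
  filter_upwards with x
  simp only [Pi.add_apply, Pi.pow_apply, id_eq]
  ring

end bridge

/-- For a real Gaussian random variable `X` with mean `m` and variance
`v > 0`, if `P(X < 0) > 0`, then the variance of `X` under the conditional distribution
given `{X < 0}` is at most `v`: one-sided truncation does not increase the variance. -/
theorem truncated_gaussian_variance_le
    {Ω : Type*} [MeasurableSpace Ω] (P : Measure Ω) [IsProbabilityMeasure P]
    (X : Ω → ℝ) (m : ℝ) (v : ℝ≥0) (hv : 0 < v)
    (hX : Measure.map X P = gaussianReal m v)
    (hpos : 0 < P {ω | X ω < 0}) :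
    variance X (P[|{ω | X ω < 0}]) ≤ (v : ℝ) := by
  have hv0 : v ≠ 0 := hv.ne'
  have hvR : (0 : ℝ) < v := by exact_mod_cast hv
  set μ := gaussianReal m v with hμ
  set φ0 := gaussianPDFReal m v 0 with hφ0def
  have hφ0 : 0 < φ0 := gaussianPDFReal_pos m v 0 hv0
  set A : Set Ω := {ω | X ω < 0} with hAdef
  have hA : A = X ⁻¹' (Iio 0) := rfl
  have hXm : AEMeasurable X P := by
    apply aemeasurable_of_map_neZero
    rw [hX]
    infer_instance
  have hPA : P A = μ (Iio 0) := by
    rw [hA, ← Measure.map_apply_of_aemeasurable hXm measurableSet_Iio, hX]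
  set p := (μ (Iio 0)).toReal with hpdef
  have hPAne : P A ≠ 0 := hpos.ne'
  have hμne : μ (Iio 0) ≠ 0 := by rw [← hPA]; exact hPAne
  have hμlt : μ (Iio 0) ≠ ⊤ := measure_ne_top _ _
  have hp : 0 < p := ENNReal.toReal_pos hμne hμlt
  have hpint : p = ∫ x in Iio 0, gaussianPDFReal m v x := by
    rw [hpdef, hμ, gaussianReal_apply_eq_integral _ hv0, ENNReal.toReal_ofReal
      (setIntegral_nonneg measurableSet_Iio fun x _ => gaussianPDFReal_nonneg m v x)]
  -- integrability facts
  have hint0 : Integrable (gaussianPDFReal m v) := integrable_gaussianPDFReal m v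
  have hint1 : Integrable (fun x => (x - m) * gaussianPDFReal m v x) :=
    my_integrable_mul_pdf hv0
  have hint2 : Integrable (fun x => (x - m) ^ 2 * gaussianPDFReal m v x) :=
    my_integrable_sq_mul_pdf hv0
  have hintx : Integrable (fun x => x * gaussianPDFReal m v x) := by
    have := hint1.add (hint0.const_mul m)
    refine this.congr ?_
    filter_upwards with x
    simp only [Pi.add_apply]
    ring
  -- first truncated moment
  have hJ1 : ∫ x in Iio 0, x * gaussianPDFReal m v x = m * p - (v : ℝ) * φ0 := by
    have hsplit : ∫ x in Iio 0, x * gaussianPDFReal m v x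
        = ∫ x in Iio 0, ((x - m) * gaussianPDFReal m v x + m * gaussianPDFReal m v x) :=
      setIntegral_congr_fun measurableSet_Iio fun x _ => by ring
    rw [hsplit, integral_add hint1.integrableOn ((hint0.const_mul m).integrableOn),
      my_integral_A hv0, integral_const_mul, ← hpint]
    ring
  -- second truncated moment
  have hJ2 : ∫ x in Iio 0, x ^ 2 * gaussianPDFReal m v x
      = (v : ℝ) * p + m ^ 2 * p - m * (v : ℝ) * φ0 := by
    have hsplit : ∫ x in Iio 0, x ^ 2 * gaussianPDFReal m v x
        = ∫ x in Iio 0, (((x - m) ^ 2 * gaussianPDFReal m v x - (v : ℝ) * gaussianPDFReal m v x)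
            + ((v : ℝ) * gaussianPDFReal m v x + (2 * m) * (x * gaussianPDFReal m v x)
              - m ^ 2 * gaussianPDFReal m v x)) :=
      setIntegral_congr_fun measurableSet_Iio fun x _ => by ring
    have hi1 : IntegrableOn
        (fun x => (x - m) ^ 2 * gaussianPDFReal m v x - (v : ℝ) * gaussianPDFReal m v x)
        (Iio 0) := (hint2.sub (hint0.const_mul _)).integrableOn
    have hi2 : IntegrableOn
        (fun x => (v : ℝ) * gaussianPDFReal m v x + (2 * m) * (x * gaussianPDFReal m v x)
          - m ^ 2 * gaussianPDFReal m v x) (Iio 0) :=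
      (((hint0.const_mul _).add (hintx.const_mul _)).sub (hint0.const_mul _)).integrableOn
    have hadd : IntegrableOn
        (fun x => (v : ℝ) * gaussianPDFReal m v x + (2 * m) * (x * gaussianPDFReal m v x))
        (Iio 0) := by
      refine Integrable.integrableOn
        ((((hint0.const_mul ((v:ℝ))).add (hintx.const_mul (2*m)))).congr ?_)
      filter_upwards with x
      simp [Pi.add_apply]
    rw [hsplit, integral_add hi1 hi2, my_integral_B hv0,
      integral_sub hadd ((hint0.const_mul _).integrableOn),
      integral_add ((hint0.const_mul _).integrableOn) ((hintx.const_mul _).integrableOn),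
      integral_const_mul, integral_const_mul, integral_const_mul, ← hpint, hJ1]
    ring
  -- Mills-type inequality
  have hq : m * p ≤ (v : ℝ) * φ0 := by
    have hintneg : Integrable (fun x => -(x - m) * gaussianPDFReal m v x) := by
      refine hint1.neg.congr ?_
      filter_upwards with x
      simp only [Pi.neg_apply]
      ring
    have hmono : ∫ x in Iio 0, m * gaussianPDFReal m v x
        ≤ ∫ x in Iio 0, -(x - m) * gaussianPDFReal m v x := by
      refine setIntegral_mono_on ((hint0.const_mul m).integrableOn) hintneg.integrableOn
        measurableSet_Iio fun x hx => ?_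
      have h1 := gaussianPDFReal_nonneg m v x
      have hx' : x < 0 := hx
      nlinarith
    have hre : ∫ x in Iio 0, -(x - m) * gaussianPDFReal m v x = (v : ℝ) * φ0 := by
      have : ∫ x in Iio 0, -(x - m) * gaussianPDFReal m v x
          = -∫ x in Iio 0, (x - m) * gaussianPDFReal m v x := by
        rw [← integral_neg]
        exact setIntegral_congr_fun measurableSet_Iio fun x _ => by ring
      rw [this, my_integral_A hv0]
      ring
    rw [integral_const_mul, ← hpint, hre] at hmono
    exact hmono
  -- conditional measure is a probability measure
  haveI : IsProbabilityMeasure (P[|A]) := cond_isProbabilityMeasure hPAne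
  -- transfer of integrals to the conditional measure
  have hcond : P[|A] = (P A)⁻¹ • P.restrict A := rfl
  have hmap : ∀ g : ℝ → ℝ, AEStronglyMeasurable g μ →
      ∫ ω, g (X ω) ∂(P[|A]) = p⁻¹ * ∫ x in Iio 0, g x ∂μ := by
    intro g hg
    rw [hcond, integral_smul_measure]
    have hres : ∫ ω in A, g (X ω) ∂P = ∫ x in Iio 0, g x ∂μ := by
      rw [hA, ← setIntegral_map measurableSet_Iio (by rwa [hX]) hXm, hX]
    rw [hres, hPA, ENNReal.toReal_inv, smul_eq_mul, hpdef]
  have hE1 : ∫ ω, X ω ∂(P[|A]) = p⁻¹ * (m * p - (v : ℝ) * φ0) := by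
    have := hmap (fun x => x) aestronglyMeasurable_id
    rw [this, my_setIntegral_gaussianReal hv0, hJ1]
  have hE2 : ∫ ω, (X ω) ^ 2 ∂(P[|A])
      = p⁻¹ * ((v : ℝ) * p + m ^ 2 * p - m * (v : ℝ) * φ0) := by
    have := hmap (fun x => x ^ 2) (by fun_prop)
    rw [this, my_setIntegral_gaussianReal hv0, hJ2]
  -- MemLp
  have hmem : MemLp X 2 (P[|A]) := by
    have h1 : MemLp X 2 P := by
      have h0 : MemLp id 2 (Measure.map X P) := by rw [hX]; exact my_memℒp_two hv0
      have := (memLp_map_measure_iff aestronglyMeasurable_id hXm).mp h0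
      simpa [Function.comp] using this
    rw [hcond]
    exact (h1.restrict A).smul_measure (by simp [ENNReal.inv_ne_top, hPAne])
  -- conclude
  rw [variance_eq_sub hmem]
  have hX2 : (P[|A])[X ^ 2] = ∫ ω, (X ω) ^ 2 ∂(P[|A]) := by
    simp only [Pi.pow_apply]
  rw [hX2, hE2, hE1]
  set q := (v : ℝ) * φ0 / p with hqdef
  have hqpos : 0 < q := div_pos (mul_pos hvR hφ0) hp
  have hmq : m ≤ q := (le_div_iff₀ hp).mpr hq
  have h2 : p⁻¹ * ((v : ℝ) * p + m ^ 2 * p - m * (v : ℝ) * φ0) = (v : ℝ) + m ^ 2 - m * q := by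
    rw [hqdef]
    field_simp
  have h1 : p⁻¹ * (m * p - (v : ℝ) * φ0) = m - q := by
    rw [hqdef]
    field_simp
  rw [h1, h2]
  nlinarith [mul_nonneg hqpos.le (sub_nonneg.2 hmq)]
end

section
/- Under the UM model with independent standard normal innovations, if σ > 0 and λ < 0, then the conditional variance of the negative incremental trading profits vanishes in the limit: Var(Δν_n | Δν_n < 0) → 0 as n → ∞. (This is condition 4 of statistical arbitrage in the UM Model Hypothesis proposition, under the sub-hypothesis −λ > 0.) -/
open MeasureTheory ProbabilityTheory Filter
open Real Set Topology
open scoped ENNReal NNReal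

noncomputable def phi : ℝ → ℝ := gaussianPDFReal 0 1

lemma phi_eq (x : ℝ) : phi x = (Real.sqrt (2 * π))⁻¹ * rexp (-x ^ 2 / 2) := by
  simp [phi, gaussianPDFReal]

lemma phi_pos (x : ℝ) : 0 < phi x := gaussianPDFReal_pos 0 1 x one_ne_zero

lemma phi_hasDeriv (x : ℝ) : HasDerivAt (fun y => -phi y) (x * phi x) x := by
  have hfun : (fun y => -phi y) = fun y => -((Real.sqrt (2 * π))⁻¹ * rexp (-y ^ 2 / 2)) :=
    funext fun y => by rw [phi_eq]
  rw [hfun, phi_eq]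
  have h : HasDerivAt (fun y : ℝ => -y ^ 2 / 2) (-x) x := by
    have := ((hasDerivAt_pow 2 x).neg).div_const 2
    exact this.congr_deriv (by norm_num; ring)
  have h2 := (h.exp.const_mul ((Real.sqrt (2 * π))⁻¹)).neg
  exact h2.congr_deriv (by ring)

lemma integrable_phi : Integrable phi := integrable_gaussianPDFReal 0 1

lemma integrable_xphi : Integrable (fun x => x * phi x) := by
  have := (integrable_mul_exp_neg_mul_sq (b := (1:ℝ)/2) (by norm_num)).const_mul
    ((Real.sqrt (2 * π))⁻¹)
  refine this.congr (Filter.Eventually.of_forall fun x => ?_)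
  simp only [phi_eq]
  ring_nf

lemma integrable_x2phi : Integrable (fun x => x ^ 2 * phi x) := by
  have h := (integrable_rpow_mul_exp_neg_mul_sq (b := (1:ℝ)/2) (by norm_num)
    (s := 2) (by norm_num)).const_mul ((Real.sqrt (2 * π))⁻¹)
  refine h.congr (Filter.Eventually.of_forall fun x => ?_)
  simp only [phi_eq, Real.rpow_two]
  ring_nf

lemma sq_div_two_atBot : Tendsto (fun x : ℝ => x ^ 2 / 2) atBot atTop := by
  refine Tendsto.atTop_div_const (by norm_num) ?_
  have h1 : Tendsto (fun x : ℝ => |x|) atBot atTop := tendsto_abs_atBot_atTop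
  have h2 : Tendsto (fun y : ℝ => y ^ 2) atTop atTop := tendsto_pow_atTop (two_ne_zero)
  exact (h2.comp h1).congr fun x => by simp [sq_abs]

lemma tendsto_phi_atBot : Tendsto phi atBot (nhds 0) := by
  have h2 : Tendsto (fun x : ℝ => rexp (-(x ^ 2 / 2))) atBot (nhds 0) :=
    Real.tendsto_exp_neg_atTop_nhds_zero.comp sq_div_two_atBot
  have := h2.const_mul ((Real.sqrt (2 * π))⁻¹)
  simp only [mul_zero] at this
  refine this.congr fun x => ?_
  rw [phi_eq, neg_div]

lemma tendsto_xphi_atBot : Tendsto (fun x => x * phi x) atBot (nhds 0) := by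
  have h2 : Tendsto (fun x : ℝ => (x ^ 2 / 2) * rexp (-(x ^ 2 / 2))) atBot (nhds 0) := by
    have := (Real.tendsto_pow_mul_exp_neg_atTop_nhds_zero 1).comp sq_div_two_atBot
    simpa [Function.comp_def] using this
  have h3 : Tendsto (fun x : ℝ => rexp (-(x ^ 2 / 2))) atBot (nhds 0) :=
    Real.tendsto_exp_neg_atTop_nhds_zero.comp sq_div_two_atBot
  have hg : Tendsto (fun x : ℝ => (Real.sqrt (2 * π))⁻¹ *
      ((x ^ 2 / 2) * rexp (-(x ^ 2 / 2)) + rexp (-(x ^ 2 / 2)))) atBot (nhds 0) := by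
    simpa using (h2.add h3).const_mul ((Real.sqrt (2 * π))⁻¹)
  refine squeeze_zero_norm (fun x => ?_) hg
  have hs : (0:ℝ) < (Real.sqrt (2 * π))⁻¹ := by positivity
  rw [phi_eq]
  have hx : |x| ≤ x ^ 2 / 2 + 1 := by nlinarith [sq_nonneg (|x| - 1), sq_abs x]
  have he : (0:ℝ) < rexp (-(x ^ 2 / 2)) := Real.exp_pos _
  rw [neg_div, Real.norm_eq_abs, abs_mul, abs_mul, abs_of_pos (Real.exp_pos _), abs_of_pos hs]
  calc |x| * ((Real.sqrt (2 * π))⁻¹ * rexp (-(x ^ 2 / 2)))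
      ≤ (x ^ 2 / 2 + 1) * ((Real.sqrt (2 * π))⁻¹ * rexp (-(x ^ 2 / 2))) := by
        exact mul_le_mul_of_nonneg_right hx (by positivity)
    _ = (Real.sqrt (2 * π))⁻¹ * ((x ^ 2 / 2) * rexp (-(x ^ 2 / 2)) + rexp (-(x ^ 2 / 2))) := by
        ring

lemma int_phi_pos (c : ℝ) : 0 < ∫ x in Iio c, phi x := by
  rw [setIntegral_pos_iff_support_of_nonneg_ae
    (Filter.Eventually.of_forall fun x => (phi_pos x).le) integrable_phi.integrableOn]
  have hsupp : Function.support phi = univ := by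
    ext x; simp [Function.mem_support, (phi_pos x).ne']
  rw [hsupp, univ_inter, Real.volume_Iio]
  simp

lemma int_xphi_Iio (c : ℝ) : ∫ x in Iio c, x * phi x = -phi c := by
  rw [setIntegral_congr_set (Iio_ae_eq_Iic (a := c))]
  have := integral_Iic_of_hasDerivAt_of_tendsto' (a := c) (f := fun x => -phi x)
    (f' := fun x => x * phi x) (m := 0)
    (fun x _ => phi_hasDeriv x) integrable_xphi.integrableOn (by simpa using tendsto_phi_atBot.neg)
  simpa using this

lemma int_x2phi_Iio (c : ℝ) :
    ∫ x in Iio c, x ^ 2 * phi x = (∫ x in Iio c, phi x) - c * phi c := by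
  have hder : ∀ x : ℝ, HasDerivAt (fun y => -(y * phi y)) (x ^ 2 * phi x - phi x) x := by
    intro x
    have hphi : HasDerivAt phi (-(x * phi x)) x := by
      have := (phi_hasDeriv x).neg
      refine (this.congr_of_eventuallyEq (Filter.Eventually.of_forall fun y => ?_)).congr_deriv rfl
      simp
    have := ((hasDerivAt_id x).mul hphi).neg
    exact this.congr_deriv (by simp only [id_eq]; ring)
  have key := integral_Iic_of_hasDerivAt_of_tendsto' (a := c) (f := fun y => -(y * phi y))
    (f' := fun x => x ^ 2 * phi x - phi x) (m := 0)
    (fun x _ => hder x) (integrable_x2phi.sub integrable_phi).integrableOn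
    (by simpa using tendsto_xphi_atBot.neg)
  have hsub : ∫ x in Iic c, (x ^ 2 * phi x - phi x)
      = (∫ x in Iic c, x ^ 2 * phi x) - ∫ x in Iic c, phi x :=
    integral_sub integrable_x2phi.integrableOn integrable_phi.integrableOn
  rw [hsub] at key
  simp only [sub_zero] at key
  have e1 : ∫ x in Iio c, x ^ 2 * phi x = ∫ x in Iic c, x ^ 2 * phi x :=
    setIntegral_congr_set (Iio_ae_eq_Iic)
  have e2 : ∫ x in Iio c, phi x = ∫ x in Iic c, phi x := setIntegral_congr_set (Iio_ae_eq_Iic)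
  rw [e1, e2]
  linarith [key]

lemma mills (c : ℝ) : 0 ≤ phi c + c * ∫ x in Iio c, phi x := by
  rcases le_or_gt 0 c with hc | hc
  · have h1 : 0 ≤ ∫ x in Iio c, phi x := (int_phi_pos c).le
    have h2 : 0 ≤ c * ∫ x in Iio c, phi x := mul_nonneg hc h1
    linarith [(phi_pos c).le]
  · have hmono : ∫ x in Iio c, x * phi x ≤ ∫ x in Iio c, c * phi x := by
      refine setIntegral_mono_on integrable_xphi.integrableOn
        (integrable_phi.const_mul c).integrableOn measurableSet_Iio fun x hx => ?_
      exact mul_le_mul_of_nonneg_right (le_of_lt hx) (phi_pos x).le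
    rw [int_xphi_Iio, integral_const_mul] at hmono
    linarith

lemma trunc_var_le (c : ℝ) :
    (∫ x in Iio c, phi x * x ^ 2) / (∫ x in Iio c, phi x)
      - ((∫ x in Iio c, phi x * x) / (∫ x in Iio c, phi x)) ^ 2 ≤ 1 := by
  have hΦ := int_phi_pos c
  have h1 : ∫ x in Iio c, phi x * x = -phi c := by
    rw [← int_xphi_Iio c]
    exact setIntegral_congr_fun measurableSet_Iio fun x _ => mul_comm _ _
  have h2 : ∫ x in Iio c, phi x * x ^ 2 = (∫ x in Iio c, phi x) - c * phi c := by
    rw [← int_x2phi_Iio c]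
    exact setIntegral_congr_fun measurableSet_Iio fun x _ => mul_comm _ _
  rw [h1, h2]
  have hm := mills c
  generalize hG : (∫ x in Iio c, phi x) = Φ at hΦ hm ⊢
  have hexp : (Φ - c * phi c) / Φ - (-phi c / Φ) ^ 2
      = 1 - phi c * (phi c + c * Φ) / Φ ^ 2 := by
    field_simp
    ring
  rw [hexp]
  have : 0 ≤ phi c * (phi c + c * Φ) / Φ ^ 2 :=
    div_nonneg (mul_nonneg (phi_pos c).le hm) (sq_nonneg _)
  linarith

lemma gauss_bridge (g : ℝ → ℝ) (c : ℝ) :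
    ∫ x in Iio c, g x ∂(gaussianReal 0 1) = ∫ x in Iio c, phi x * g x := by
  rw [gaussianReal_of_var_ne_zero _ one_ne_zero]
  have hpdf : gaussianPDF 0 1 = fun x => ((gaussianPDFReal 0 1 x).toNNReal : ℝ≥0∞) := rfl
  rw [hpdf, setIntegral_withDensity_eq_setIntegral_smul
    ((measurable_gaussianPDFReal 0 1).real_toNNReal) g measurableSet_Iio]
  refine setIntegral_congr_fun measurableSet_Iio fun x _ => ?_
  simp only [NNReal.smul_def, Real.coe_toNNReal _ (gaussianPDFReal_nonneg 0 1 x)]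
  rfl

lemma gauss_measure_Iio (c : ℝ) :
    gaussianReal 0 1 (Iio c) = ENNReal.ofReal (∫ x in Iio c, phi x) :=
  gaussianReal_apply_eq_integral 0 one_ne_zero (Iio c)

/-- Under the UM model with independent standard normal innovations,
if `σ > 0` and `λ < 0`, then the conditional variance of the negative incremental trading
profits vanishes in the limit: `Var(Δν n | Δν n < 0) → 0` as `n → ∞`. -/
theorem um_conditional_variance_tendsto_zero
    {Ω : Type*} [MeasurableSpace Ω] (P : Measure Ω) [IsProbabilityMeasure P]
    (μ θ lam σ : ℝ) (hσ : 0 < σ) (hlam : lam < 0)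
    (z : ℕ → Ω → ℝ) (hz_meas : ∀ i, Measurable (z i))
    (hz_indep : iIndepFun z P)
    (hz_gauss : ∀ i, Measure.map (z i) P = gaussianReal 0 1)
    (Δν : ℕ → Ω → ℝ)
    (hΔν : ∀ i ω, Δν i ω = μ * (i : ℝ) ^ θ + σ * (i : ℝ) ^ lam * z i ω) :
    Tendsto (fun n : ℕ => variance (Δν n) (P[|{ω | Δν n ω < 0}])) atTop (nhds 0) := by
  have hb : Tendsto (fun n : ℕ => σ ^ 2 * ((n : ℝ) ^ lam) ^ 2) atTop (nhds 0) := by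
    have h1 : Tendsto (fun x : ℝ => x ^ lam) atTop (nhds 0) := by
      have := tendsto_rpow_neg_atTop (y := -lam) (by linarith)
      simpa using this
    have h2 : Tendsto (fun n : ℕ => ((n : ℝ) ^ lam)) atTop (nhds 0) :=
      h1.comp tendsto_natCast_atTop_atTop
    have h3 := (h2.pow 2).const_mul (σ ^ 2)
    simpa using h3
  have key : ∀ n : ℕ, 1 ≤ n →
      variance (Δν n) (P[|{ω | Δν n ω < 0}]) ≤ σ ^ 2 * ((n : ℝ) ^ lam) ^ 2 := by
    intro n hn
    have hnpos : (0:ℝ) < n := by exact_mod_cast hn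
    have hs : 0 < σ * (n : ℝ) ^ lam := mul_pos hσ (rpow_pos_of_pos hnpos lam)
    set sN := σ * (n : ℝ) ^ lam with hsN
    set mN := μ * (n : ℝ) ^ θ with hmN
    set c := -mN / sN with hcdef
    set A := {ω | Δν n ω < 0} with hAdef
    have hA : A = z n ⁻¹' (Iio c) := by
      ext ω
      simp only [hAdef, mem_setOf_eq, mem_preimage, mem_Iio, hΔν n ω, hcdef]
      constructor
      · intro h
        rw [lt_div_iff₀ hs, hsN, hmN, mul_comm (z n ω) (σ * (n:ℝ) ^ lam)]
        linarith
      · intro h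
        rw [lt_div_iff₀ hs, hsN, hmN, mul_comm (z n ω) (σ * (n:ℝ) ^ lam)] at h
        linarith
    have hΦ : 0 < ∫ x in Iio c, phi x := int_phi_pos c
    have hPA : P A = ENNReal.ofReal (∫ x in Iio c, phi x) := by
      rw [hA, ← Measure.map_apply (hz_meas n) measurableSet_Iio, hz_gauss n, gauss_measure_Iio]
    have hPA0 : P A ≠ 0 := by
      rw [hPA]
      simpa [ENNReal.ofReal_eq_zero, not_le] using hΦ
    haveI : IsProbabilityMeasure (P[|A]) := cond_isProbabilityMeasure hPA0
    have hPAtoReal : ((P A)⁻¹).toReal = (∫ x in Iio c, phi x)⁻¹ := by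
      rw [hPA, ENNReal.toReal_inv, ENNReal.toReal_ofReal hΦ.le]
    have hz2P : MemLp (z n) 2 P := by
      have hint : Integrable (fun x : ℝ => x ^ 2) (gaussianReal 0 1) := by
        rw [gaussianReal_of_var_ne_zero _ one_ne_zero]
        have hpdf : gaussianPDF 0 1 = fun x => ((gaussianPDFReal 0 1 x).toNNReal : ℝ≥0∞) := rfl
        rw [hpdf, integrable_withDensity_iff_integrable_smul
          ((measurable_gaussianPDFReal 0 1).real_toNNReal)]
        refine integrable_x2phi.congr (Filter.Eventually.of_forall fun x => ?_)
        simp [phi, NNReal.smul_def, Real.coe_toNNReal _ (gaussianPDFReal_nonneg 0 1 x), mul_comm]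
      have hid : MemLp (fun x : ℝ => x) 2 (gaussianReal 0 1) :=
        (memLp_two_iff_integrable_sq aestronglyMeasurable_id).2 hint
      have h1 : MemLp (fun x : ℝ => x) 2 (Measure.map (z n) P) := by
        rw [hz_gauss n]; exact hid
      have := (memLp_map_measure_iff aestronglyMeasurable_id (hz_meas n).aemeasurable).mp h1
      simpa [Function.comp_def] using this
    have hz2Q : MemLp (z n) 2 (P[|A]) := by
      simp only [ProbabilityTheory.cond]
      exact (hz2P.restrict A).smul_measure (ENNReal.inv_ne_top.mpr hPA0)
    have hzQ_int : Integrable (z n) (P[|A]) := hz2Q.integrable one_le_two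
    have hz2Q_int : Integrable (fun ω => z n ω ^ 2) (P[|A]) := hz2Q.integrable_sq
    have hEQ : ∀ g : ℝ → ℝ, Measurable g →
        ∫ ω, g (z n ω) ∂(P[|A])
          = (∫ x in Iio c, phi x)⁻¹ * ∫ x in Iio c, phi x * g x := by
      intro g hg
      simp only [ProbabilityTheory.cond]
      rw [integral_smul_measure]
      have hmap : ∫ ω in A, g (z n ω) ∂P = ∫ x in Iio c, g x ∂(Measure.map (z n) P) := by
        rw [hA]
        exact (setIntegral_map measurableSet_Iio hg.aestronglyMeasurable
          (hz_meas n).aemeasurable).symm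
      rw [hmap, hz_gauss n, gauss_bridge, hPAtoReal, smul_eq_mul]
    have hE1 := hEQ (fun x => x) measurable_id
    have hE2 := hEQ (fun x => x ^ 2) (measurable_id.pow_const 2)
    have hform : Δν n = fun ω => mN + sN * z n ω := funext fun ω => hΔν n ω
    have hΔ2Q : MemLp (Δν n) 2 (P[|A]) := by
      rw [hform]
      exact (memLp_const mN).add (hz2Q.const_mul sN)
    rw [variance_eq_sub hΔ2Q]
    have hint1 : ∫ ω, Δν n ω ∂(P[|A])
        = mN + sN * ((∫ x in Iio c, phi x)⁻¹ * ∫ x in Iio c, phi x * x) := by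
      rw [hform]
      rw [integral_add (integrable_const mN) (hzQ_int.const_mul sN), integral_const,
        integral_const_mul, hE1]
      simp
    have hint2 : ∫ ω, (Δν n ω) ^ 2 ∂(P[|A])
        = mN ^ 2 + (2 * mN * sN) * ((∫ x in Iio c, phi x)⁻¹ * ∫ x in Iio c, phi x * x)
          + sN ^ 2 * ((∫ x in Iio c, phi x)⁻¹ * ∫ x in Iio c, phi x * x ^ 2) := by
      have hexp : (fun ω => (Δν n ω) ^ 2)
          = fun ω => mN ^ 2 + (2 * mN * sN) * z n ω + sN ^ 2 * (z n ω ^ 2) :=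
        funext fun ω => by rw [hΔν n ω]; ring
      rw [hexp]
      have ha : Integrable (fun ω => mN ^ 2 + 2 * mN * sN * z n ω) (P[|A]) := by
        exact (integrable_const _).add (hzQ_int.const_mul _)
      have hb' : Integrable (fun ω => sN ^ 2 * z n ω ^ 2) (P[|A]) := by
        exact hz2Q_int.const_mul _
      rw [integral_add ha hb',
        integral_add (integrable_const (mN ^ 2)) (hzQ_int.const_mul (2 * mN * sN)),
        integral_const, integral_const_mul, integral_const_mul, hE1, hE2]
      simp
    have hXsq : (P[|A])[(Δν n) ^ 2] = ∫ ω, (Δν n ω) ^ 2 ∂(P[|A]) := rfl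
    rw [hXsq, hint2, hint1]
    have hI : (∫ x in Iio c, phi x)⁻¹ * (∫ x in Iio c, phi x * x ^ 2)
        - ((∫ x in Iio c, phi x)⁻¹ * (∫ x in Iio c, phi x * x)) ^ 2 ≤ 1 := by
      simpa [div_eq_inv_mul] using trunc_var_le c
    have hcalc : mN ^ 2 + (2 * mN * sN) * ((∫ x in Iio c, phi x)⁻¹ * ∫ x in Iio c, phi x * x)
          + sN ^ 2 * ((∫ x in Iio c, phi x)⁻¹ * ∫ x in Iio c, phi x * x ^ 2)
        - (mN + sN * ((∫ x in Iio c, phi x)⁻¹ * ∫ x in Iio c, phi x * x)) ^ 2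
        = sN ^ 2 * ((∫ x in Iio c, phi x)⁻¹ * (∫ x in Iio c, phi x * x ^ 2)
          - ((∫ x in Iio c, phi x)⁻¹ * (∫ x in Iio c, phi x * x)) ^ 2) := by
      ring
    rw [hcalc, hsN]
    calc (σ * (n : ℝ) ^ lam) ^ 2 * ((∫ x in Iio c, phi x)⁻¹ * (∫ x in Iio c, phi x * x ^ 2)
          - ((∫ x in Iio c, phi x)⁻¹ * (∫ x in Iio c, phi x * x)) ^ 2)
        ≤ (σ * (n : ℝ) ^ lam) ^ 2 * 1 := mul_le_mul_of_nonneg_left hI (sq_nonneg _)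
      _ = σ ^ 2 * ((n : ℝ) ^ lam) ^ 2 := by rw [mul_one, mul_pow]
  refine tendsto_of_tendsto_of_tendsto_of_le_of_le' tendsto_const_nhds hb ?_ ?_
  · exact Filter.Eventually.of_forall fun n => variance_nonneg _ _
  · exact Filter.eventually_atTop.mpr ⟨1, key⟩
end

section
/- (UM Model Hypothesis, −λ > 0 branch.) Under the UM model with independent standard normal innovations, if μ > 0, σ > 0, λ < 0, θ − λ + 1/2 > 0 and θ + 1 > 0, then the trading strategy satisfies the defining conditions of a statistical arbitrage: (1) ν(0) = 0; (2) lim_{n→∞} E[ν(n)] > 0 (indeed E[ν(n)] → +∞); (3) lim_{n→∞} P(ν(n) < 0) = 0; and (4) lim_{n→∞} Var(Δν_n | Δν_n < 0) = 0. -/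
open MeasureTheory ProbabilityTheory Filter Real Set
open scoped ENNReal NNReal

private lemma pdf_eq (x : ℝ) :
    gaussianPDFReal 0 1 x = (Real.sqrt (2 * π))⁻¹ * Real.exp (-x ^ 2 / 2) := by
  simp [gaussianPDFReal, NNReal.coe_one]

private lemma pdf_nonneg (x : ℝ) : 0 ≤ gaussianPDFReal 0 1 x :=
  gaussianPDFReal_nonneg 0 1 x

private lemma gauss_eq_withDensity :
    gaussianReal 0 1
      = volume.withDensity fun x => ((gaussianPDFReal 0 1 x).toNNReal : ℝ≥0∞) := by
  rw [gaussianReal_of_var_ne_zero 0 one_ne_zero]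
  rfl

private lemma gauss_setInt (f : ℝ → ℝ) (s : Set ℝ) (hs : MeasurableSet s) :
    ∫ x in s, f x ∂(gaussianReal 0 1) = ∫ x in s, gaussianPDFReal 0 1 x * f x := by
  rw [gauss_eq_withDensity, restrict_withDensity hs,
    integral_withDensity_eq_integral_smul (measurable_gaussianPDFReal 0 1).real_toNNReal]
  congr 1 with x
  simp [NNReal.smul_def, Real.coe_toNNReal _ (pdf_nonneg x)]

private lemma gauss_int (f : ℝ → ℝ) :
    ∫ x, f x ∂(gaussianReal 0 1) = ∫ x, gaussianPDFReal 0 1 x * f x := by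
  simpa using gauss_setInt f Set.univ MeasurableSet.univ

private lemma gauss_integrable (f : ℝ → ℝ)
    (h : Integrable (fun x => gaussianPDFReal 0 1 x * f x)) :
    Integrable f (gaussianReal 0 1) := by
  rw [gauss_eq_withDensity]
  rw [integrable_withDensity_iff_integrable_smul
    (measurable_gaussianPDFReal 0 1).real_toNNReal]
  refine h.congr (Filter.Eventually.of_forall fun x => ?_)
  simp [NNReal.smul_def, Real.coe_toNNReal _ (pdf_nonneg x)]

private lemma int_pdf_mul_x : Integrable (fun x : ℝ => gaussianPDFReal 0 1 x * x) := by
  have h : Integrable (fun x : ℝ => x * Real.exp (-(1/2) * x ^ 2)) :=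
    integrable_mul_exp_neg_mul_sq (by norm_num)
  refine ((h.const_mul (Real.sqrt (2 * π))⁻¹).congr
    (Filter.Eventually.of_forall fun x => ?_))
  simp only [pdf_eq]; ring_nf

private lemma int_pdf_mul_sq : Integrable (fun x : ℝ => gaussianPDFReal 0 1 x * x ^ 2) := by
  have h : Integrable (fun x : ℝ => x ^ (2:ℝ) * Real.exp (-(1/2) * x ^ 2)) :=
    integrable_rpow_mul_exp_neg_mul_sq (by norm_num) (by norm_num)
  have h2 : Integrable (fun x : ℝ => x ^ (2:ℕ) * Real.exp (-(1/2) * x ^ 2)) := by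
    refine h.congr (Filter.Eventually.of_forall fun x => ?_)
    norm_num [Real.rpow_natCast]
  refine ((h2.const_mul (Real.sqrt (2 * π))⁻¹).congr
    (Filter.Eventually.of_forall fun x => ?_))
  simp only [pdf_eq]; ring_nf

private lemma gauss_mean : ∫ x, x ∂(gaussianReal 0 1) = 0 := by
  rw [gauss_int]
  have hodd : (fun x : ℝ => gaussianPDFReal 0 1 (-x) * (-x))
      = fun x : ℝ => -(gaussianPDFReal 0 1 x * x) := by
    funext x; simp only [pdf_eq]; ring_nf
  have h := integral_neg_eq_self (fun x : ℝ => gaussianPDFReal 0 1 x * x) volume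
  rw [hodd, integral_neg] at h
  linarith

private lemma gauss_memℒp2 : MemLp (id : ℝ → ℝ) 2 (gaussianReal 0 1) := by
  rw [memLp_two_iff_integrable_sq measurable_id.aestronglyMeasurable]
  exact gauss_integrable _ int_pdf_mul_sq

private lemma gauss_measure_Iio_pos (c : ℝ) :
    0 < ∫ x in Iio c, gaussianPDFReal 0 1 x := by
  rw [setIntegral_pos_iff_support_of_nonneg_ae
    (Filter.Eventually.of_forall fun x => pdf_nonneg x)
    ((integrable_gaussianPDFReal 0 1).integrableOn)]
  have hsupp : Function.support (gaussianPDFReal 0 1) = Set.univ := by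
    ext x; simp [Function.mem_support,
      (gaussianPDFReal_pos 0 1 x one_ne_zero).ne']
  rw [hsupp, Set.univ_inter]
  simp [Real.volume_Iio]

private lemma setIntegral_Iio_sub (c : ℝ) (g : ℝ → ℝ) :
    ∫ x in Iio c, g x = ∫ u in Ioi (0:ℝ), g (c - u) := by
  have mp : MeasurePreserving (fun u : ℝ => c - u) volume volume :=
    Measure.measurePreserving_sub_left volume c
  have emb : MeasurableEmbedding (fun u : ℝ => c - u) :=
    (Homeomorph.subLeft c).measurableEmbedding
  have h := mp.setIntegral_preimage_emb emb g (Iio c)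
  have hpre : (fun u : ℝ => c - u) ⁻¹' Iio c = Ioi 0 := by
    ext u; simp
  rw [hpre] at h
  exact h.symm

private lemma sq_exp_le (u : ℝ) : u ^ 2 * Real.exp (-u ^ 2 / 4) ≤ 4 / Real.exp 1 := by
  have h := Real.add_one_le_exp (u ^ 2 / 4 - 1)
  have hA := Real.exp_pos (-u ^ 2 / 4)
  have he := Real.exp_pos 1
  have key := mul_le_mul_of_nonneg_right h hA.le
  have h4 : Real.exp (u ^ 2 / 4 - 1) * Real.exp (-u ^ 2 / 4) = 1 / Real.exp 1 := by
    rw [← Real.exp_add, show u ^ 2 / 4 - 1 + -u ^ 2 / 4 = -1 by ring, Real.exp_neg]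
    rw [one_div]
  rw [h4] at key
  have h5 : u ^ 2 / 4 * Real.exp (-u ^ 2 / 4) ≤ 1 / Real.exp 1 := by nlinarith
  have h6 : (4:ℝ) / Real.exp 1 = 4 * (1 / Real.exp 1) := by ring
  linarith

private lemma tail_core {c : ℝ} (hc : c ≤ 0) :
    ∫ x in Iio c, (x - c) ^ 2 * Real.exp (-x ^ 2 / 2)
      ≤ 3 * ∫ x in Iio c, Real.exp (-x ^ 2 / 2) := by
  have e4 : (0:ℝ) < 1/4 := by norm_num
  have e2 : (0:ℝ) < 1/2 := by norm_num
  -- integrability facts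
  have int4 : IntegrableOn (fun u : ℝ => Real.exp (-(1/4) * u ^ 2)) (Ioi 0) :=
    (integrable_exp_neg_mul_sq e4).integrableOn
  have int2 : IntegrableOn (fun u : ℝ => Real.exp (-(1/2) * u ^ 2)) (Ioi 0) :=
    (integrable_exp_neg_mul_sq e2).integrableOn
  have meas1 : Measurable fun u : ℝ => u ^ 2 * Real.exp (c * u - u ^ 2 / 2) :=
    (measurable_id.pow_const 2).mul ((measurable_const.mul measurable_id).sub
      ((measurable_id.pow_const 2).div_const 2)).exp
  have measE : ∀ d : ℝ, Measurable fun u : ℝ => Real.exp (d * u - u ^ 2 / 4) := fun d =>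
    ((measurable_const.mul measurable_id).sub
      ((measurable_id.pow_const 2).div_const 4)).exp
  have measE2 : ∀ d : ℝ, Measurable fun u : ℝ => Real.exp (d * u - u ^ 2 / 2) := fun d =>
    ((measurable_const.mul measurable_id).sub
      ((measurable_id.pow_const 2).div_const 2)).exp
  have hbd1 : ∀ u : ℝ, 0 ≤ u → u ^ 2 * Real.exp (c * u - u ^ 2 / 2)
      ≤ (4 / Real.exp 1) * Real.exp (-(1/4) * u ^ 2) := by
    intro u hu
    have h1 : Real.exp (c * u - u ^ 2 / 2)
        = Real.exp (c * u) * Real.exp (-u ^ 2 / 4) * Real.exp (-(1/4) * u ^ 2) := by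
      rw [← Real.exp_add, ← Real.exp_add]; ring_nf
    have h2 : Real.exp (c * u) ≤ 1 := by
      rw [← Real.exp_zero]
      exact Real.exp_le_exp.mpr (mul_nonpos_of_nonpos_of_nonneg hc hu)
    have h3 := sq_exp_le u
    have h4 := Real.exp_pos (-(1/4) * u ^ 2)
    have h5 := Real.exp_pos (-u ^ 2 / 4)
    have h6 := Real.exp_pos (c * u)
    have step : u ^ 2 * Real.exp (-u ^ 2 / 4) * Real.exp (c * u)
        ≤ 4 / Real.exp 1 * 1 := mul_le_mul h3 h2 h6.le (by positivity)
    calc u ^ 2 * Real.exp (c * u - u ^ 2 / 2)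
        = (u ^ 2 * Real.exp (-u ^ 2 / 4) * Real.exp (c * u)) * Real.exp (-(1/4) * u ^ 2) := by
          rw [h1]; ring
      _ ≤ (4 / Real.exp 1 * 1) * Real.exp (-(1/4) * u ^ 2) :=
          mul_le_mul_of_nonneg_right step h4.le
      _ = 4 / Real.exp 1 * Real.exp (-(1/4) * u ^ 2) := by ring
  have intI1 : IntegrableOn (fun u : ℝ => u ^ 2 * Real.exp (c * u - u ^ 2 / 2)) (Ioi 0) := by
    refine Integrable.mono' (int4.const_mul (4 / Real.exp 1))
      meas1.aestronglyMeasurable ?_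
    filter_upwards [ae_restrict_mem measurableSet_Ioi] with u hu
    rw [Real.norm_eq_abs, abs_of_nonneg (by positivity)]
    exact hbd1 u (le_of_lt hu)
  have intI2 : IntegrableOn (fun u : ℝ => Real.exp (c * u - u ^ 2 / 4)) (Ioi 0) := by
    refine Integrable.mono' int4 (measE c).aestronglyMeasurable ?_
    filter_upwards [ae_restrict_mem measurableSet_Ioi] with u hu
    rw [Real.norm_eq_abs, abs_of_nonneg (Real.exp_pos _).le]
    apply Real.exp_le_exp.mpr
    nlinarith [mul_nonpos_of_nonpos_of_nonneg hc (le_of_lt hu)]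
  have intI3 : ∀ d : ℝ, d ≤ 0 → IntegrableOn (fun u : ℝ => Real.exp (d * u - u ^ 2 / 2)) (Ioi 0) := by
    intro d hd
    refine Integrable.mono' int2 (measE2 d).aestronglyMeasurable ?_
    filter_upwards [ae_restrict_mem measurableSet_Ioi] with u hu
    rw [Real.norm_eq_abs, abs_of_nonneg (Real.exp_pos _).le]
    apply Real.exp_le_exp.mpr
    nlinarith [mul_nonpos_of_nonpos_of_nonneg hd (le_of_lt hu)]
  -- rewrite both sides via substitution x = c - u
  rw [setIntegral_Iio_sub c, setIntegral_Iio_sub c]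
  have hexp : ∀ u : ℝ, Real.exp (-(c - u) ^ 2 / 2)
      = Real.exp (-c ^ 2 / 2) * Real.exp (c * u - u ^ 2 / 2) := by
    intro u; rw [← Real.exp_add]; ring_nf
  have hL : ∫ u in Ioi (0:ℝ), (c - u - c) ^ 2 * Real.exp (-(c - u) ^ 2 / 2)
      = Real.exp (-c ^ 2 / 2) * ∫ u in Ioi (0:ℝ), u ^ 2 * Real.exp (c * u - u ^ 2 / 2) := by
    rw [← integral_const_mul]
    congr 1 with u
    rw [hexp u]; ring
  have hR : ∫ u in Ioi (0:ℝ), Real.exp (-(c - u) ^ 2 / 2)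
      = Real.exp (-c ^ 2 / 2) * ∫ u in Ioi (0:ℝ), Real.exp (c * u - u ^ 2 / 2) := by
    rw [← integral_const_mul]
    congr 1 with u
    rw [hexp u]
  rw [hL, hR]
  have key : ∫ u in Ioi (0:ℝ), u ^ 2 * Real.exp (c * u - u ^ 2 / 2)
      ≤ 3 * ∫ u in Ioi (0:ℝ), Real.exp (c * u - u ^ 2 / 2) := by
    have step1 : ∫ u in Ioi (0:ℝ), u ^ 2 * Real.exp (c * u - u ^ 2 / 2)
        ≤ ∫ u in Ioi (0:ℝ), (4 / Real.exp 1) * Real.exp (c * u - u ^ 2 / 4) := by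
      refine setIntegral_mono_on intI1 (intI2.const_mul _) measurableSet_Ioi ?_
      intro u hu
      have h1 : Real.exp (c * u - u ^ 2 / 2)
          = Real.exp (-u ^ 2 / 4) * Real.exp (c * u - u ^ 2 / 4) := by
        rw [← Real.exp_add]; ring_nf
      have h3 := sq_exp_le u
      have h4 := Real.exp_pos (c * u - u ^ 2 / 4)
      calc u ^ 2 * Real.exp (c * u - u ^ 2 / 2)
          = (u ^ 2 * Real.exp (-u ^ 2 / 4)) * Real.exp (c * u - u ^ 2 / 4) := by
            rw [h1]; ring
        _ ≤ (4 / Real.exp 1) * Real.exp (c * u - u ^ 2 / 4) :=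
            mul_le_mul_of_nonneg_right h3 h4.le
    have step2 : ∫ u in Ioi (0:ℝ), Real.exp (c * u - u ^ 2 / 4)
        = Real.sqrt 2 * ∫ v in Ioi (0:ℝ), Real.exp (Real.sqrt 2 * c * v - v ^ 2 / 2) := by
      have hs2 : (0:ℝ) < Real.sqrt 2 := by positivity
      have h := integral_comp_mul_left_Ioi
        (fun u => Real.exp (c * u - u ^ 2 / 4)) 0 hs2
      rw [mul_zero] at h
      have hcong : ∫ x in Ioi (0:ℝ),
            Real.exp (c * (Real.sqrt 2 * x) - (Real.sqrt 2 * x) ^ 2 / 4)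
          = ∫ v in Ioi (0:ℝ), Real.exp (Real.sqrt 2 * c * v - v ^ 2 / 2) := by
        refine integral_congr_ae (Filter.Eventually.of_forall fun v => ?_)
        show Real.exp (c * (Real.sqrt 2 * v) - (Real.sqrt 2 * v) ^ 2 / 4)
            = Real.exp (Real.sqrt 2 * c * v - v ^ 2 / 2)
        rw [mul_pow, Real.sq_sqrt (by norm_num : (0:ℝ) ≤ 2)]
        congr 1
        ring
      rw [hcong] at h
      rw [h, smul_eq_mul, ← mul_assoc, mul_inv_cancel₀ (ne_of_gt hs2), one_mul]
    have step3 : ∫ v in Ioi (0:ℝ), Real.exp (Real.sqrt 2 * c * v - v ^ 2 / 2)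
        ≤ ∫ v in Ioi (0:ℝ), Real.exp (c * v - v ^ 2 / 2) := by
      have hsc : Real.sqrt 2 * c ≤ 0 :=
        mul_nonpos_of_nonneg_of_nonpos (Real.sqrt_nonneg 2) hc
      refine setIntegral_mono_on (intI3 _ hsc) (intI3 c hc) measurableSet_Ioi ?_
      intro v hv
      apply Real.exp_le_exp.mpr
      have h1 : Real.sqrt 2 * c * v ≤ c * v := by
        have hs : (1:ℝ) ≤ Real.sqrt 2 := by
          rw [show (1:ℝ) = Real.sqrt 1 by simp]
          exact Real.sqrt_le_sqrt (by norm_num)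
        have h0 : 0 ≤ (Real.sqrt 2 - 1) * v := mul_nonneg (by linarith) (le_of_lt hv)
        have h5 := mul_nonpos_of_nonpos_of_nonneg hc h0
        nlinarith
      linarith
    have sqrt2_lt : Real.sqrt 2 * (4 / Real.exp 1) ≤ 3 := by
      have h1 : Real.sqrt 2 ≤ 1.5 := by
        rw [show (1.5:ℝ) = Real.sqrt (1.5 ^ 2) by rw [Real.sqrt_sq]; norm_num]
        exact Real.sqrt_le_sqrt (by norm_num)
      have h2 : (2.7:ℝ) < Real.exp 1 := by
        have := Real.exp_one_gt_d9
        linarith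
      have h3 := Real.exp_pos 1
      have h4 : Real.sqrt 2 * (4 / Real.exp 1) = (Real.sqrt 2 * 4) / Real.exp 1 := by ring
      rw [h4, div_le_iff₀ h3]
      nlinarith
    have intpos : 0 ≤ ∫ v in Ioi (0:ℝ), Real.exp (c * v - v ^ 2 / 2) :=
      setIntegral_nonneg measurableSet_Ioi fun v _ => (Real.exp_pos _).le
    calc ∫ u in Ioi (0:ℝ), u ^ 2 * Real.exp (c * u - u ^ 2 / 2)
        ≤ ∫ u in Ioi (0:ℝ), (4 / Real.exp 1) * Real.exp (c * u - u ^ 2 / 4) := step1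
      _ = (4 / Real.exp 1) * ∫ u in Ioi (0:ℝ), Real.exp (c * u - u ^ 2 / 4) :=
          integral_const_mul _ _
      _ = (4 / Real.exp 1) * (Real.sqrt 2 * ∫ v in Ioi (0:ℝ),
            Real.exp (Real.sqrt 2 * c * v - v ^ 2 / 2)) := by rw [step2]
      _ ≤ (4 / Real.exp 1) * (Real.sqrt 2 * ∫ v in Ioi (0:ℝ),
            Real.exp (c * v - v ^ 2 / 2)) := by
          have h4 : (0:ℝ) ≤ 4 / Real.exp 1 := by positivity
          have hs : (0:ℝ) ≤ Real.sqrt 2 := Real.sqrt_nonneg 2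
          apply mul_le_mul_of_nonneg_left _ h4
          exact mul_le_mul_of_nonneg_left step3 hs
      _ ≤ 3 * ∫ v in Ioi (0:ℝ), Real.exp (c * v - v ^ 2 / 2) := by
          rw [← mul_assoc, mul_comm (4 / Real.exp 1) (Real.sqrt 2)]
          exact mul_le_mul_of_nonneg_right sqrt2_lt intpos
  have hexpc : (0:ℝ) ≤ Real.exp (-c ^ 2 / 2) := (Real.exp_pos _).le
  calc Real.exp (-c ^ 2 / 2) * ∫ u in Ioi (0:ℝ), u ^ 2 * Real.exp (c * u - u ^ 2 / 2)
      ≤ Real.exp (-c ^ 2 / 2) * (3 * ∫ u in Ioi (0:ℝ), Real.exp (c * u - u ^ 2 / 2)) :=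
        mul_le_mul_of_nonneg_left key hexpc
    _ = 3 * (Real.exp (-c ^ 2 / 2) * ∫ u in Ioi (0:ℝ), Real.exp (c * u - u ^ 2 / 2)) := by ring

private lemma sum_rpow_le {p : ℝ} (hp1 : -1 < p) (hp0 : p < 0) {n : ℕ} (hn : 1 ≤ n) :
    ∑ i ∈ Finset.Icc 1 n, (i:ℝ) ^ p ≤ 1 + (n:ℝ) ^ (p + 1) / (p + 1) := by
  have hp1' : (0:ℝ) < p + 1 := by linarith
  have hsplit : ∑ i ∈ Finset.Icc 1 n, (i:ℝ) ^ p
      = ((1:ℕ):ℝ) ^ p + ∑ i ∈ Finset.Ioc 1 n, (i:ℝ) ^ p := by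
    rw [← Finset.Icc_erase_left]
    exact (Finset.add_sum_erase _ _ (Finset.mem_Icc.mpr ⟨le_refl 1, hn⟩)).symm
  have hre : ∑ i ∈ Finset.Ioc 1 n, (i:ℝ) ^ p
      = ∑ i ∈ Finset.Ico 1 n, ((i + 1 : ℕ):ℝ) ^ p := by
    rw [← Finset.Icc_add_one_left_eq_Ioc, ← Finset.Ico_add_one_right_eq_Icc, ← Finset.map_add_right_Ico 1 n 1,
      Finset.sum_map]
    rfl
  have hanti : AntitoneOn (fun x : ℝ => x ^ p) (Set.Icc ((1:ℕ):ℝ) ((n:ℕ):ℝ)) := by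
    intro x hx y hy hxy
    have hx0 : (0:ℝ) < x := lt_of_lt_of_le one_pos (by exact_mod_cast hx.1)
    exact Real.rpow_le_rpow_of_nonpos hx0 hxy hp0.le
  have hint := AntitoneOn.sum_le_integral_Ico hn hanti
  have hval : ∫ x in ((1:ℕ):ℝ)..((n:ℕ):ℝ), x ^ p
      = ((n:ℝ) ^ (p + 1) - 1) / (p + 1) := by
    rw [integral_rpow (Or.inl hp1)]
    norm_num
  rw [hsplit, hre]
  have h1 : ((1:ℕ):ℝ) ^ p = 1 := by norm_num
  rw [h1]
  have h2 : ((n:ℝ) ^ (p + 1) - 1) / (p + 1) ≤ (n:ℝ) ^ (p + 1) / (p + 1) := by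
    exact (div_le_div_iff_of_pos_right hp1').mpr (by linarith)
  calc 1 + ∑ i ∈ Finset.Ico 1 n, ((i + 1 : ℕ):ℝ) ^ p
      ≤ 1 + ∫ x in ((1:ℕ):ℝ)..((n:ℕ):ℝ), x ^ p := by linarith [hint]
    _ = 1 + ((n:ℝ) ^ (p + 1) - 1) / (p + 1) := by rw [hval]
    _ ≤ 1 + (n:ℝ) ^ (p + 1) / (p + 1) := by linarith [h2]
private lemma tail_bound {c : ℝ} (hc : c ≤ 0) :
    ∫ x in Iio c, gaussianPDFReal 0 1 x * (x - c) ^ 2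
      ≤ 3 * ∫ x in Iio c, gaussianPDFReal 0 1 x := by
  have hcnst : (0:ℝ) ≤ (Real.sqrt (2 * π))⁻¹ := by positivity
  have hL : ∫ x in Iio c, gaussianPDFReal 0 1 x * (x - c) ^ 2
      = (Real.sqrt (2 * π))⁻¹ * ∫ x in Iio c, (x - c) ^ 2 * Real.exp (-x ^ 2 / 2) := by
    rw [← integral_const_mul]
    refine integral_congr_ae (Filter.Eventually.of_forall fun x => ?_)
    simp only [pdf_eq]; ring
  have hRr : ∫ x in Iio c, gaussianPDFReal 0 1 x
      = (Real.sqrt (2 * π))⁻¹ * ∫ x in Iio c, Real.exp (-x ^ 2 / 2) := by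
    rw [← integral_const_mul]
    refine integral_congr_ae (Filter.Eventually.of_forall fun x => ?_)
    simp only [pdf_eq]
  rw [hL, hRr]
  calc (Real.sqrt (2 * π))⁻¹ * ∫ x in Iio c, (x - c) ^ 2 * Real.exp (-x ^ 2 / 2)
      ≤ (Real.sqrt (2 * π))⁻¹ * (3 * ∫ x in Iio c, Real.exp (-x ^ 2 / 2)) :=
        mul_le_mul_of_nonneg_left (tail_core hc) hcnst
    _ = 3 * ((Real.sqrt (2 * π))⁻¹ * ∫ x in Iio c, Real.exp (-x ^ 2 / 2)) := by ring

/-- (UM Model Hypothesis, `-λ > 0` branch.) Under the UM model with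
independent standard normal innovations, if `μ > 0`, `σ > 0`, `λ < 0`,
`θ - λ + 1/2 > 0` and `θ + 1 > 0`, then the trading strategy satisfies the defining
conditions of a statistical arbitrage:
(1) `ν 0 = 0`; (2) `E[ν n] → +∞` (so the limit of expected profits is positive);
(3) `P(ν n < 0) → 0`; (4) `Var(Δν n | Δν n < 0) → 0`. -/
theorem um_model_statistical_arbitrage
    {Ω : Type*} [MeasurableSpace Ω] (P : Measure Ω) [IsProbabilityMeasure P]
    (μ θ lam σ : ℝ) (hμ : 0 < μ) (hσ : 0 < σ) (hlam : lam < 0)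
    (hθlam : 0 < θ - lam + 1 / 2) (hθ : 0 < θ + 1)
    (z : ℕ → Ω → ℝ) (hz_meas : ∀ i, Measurable (z i))
    (hz_indep : iIndepFun z P)
    (hz_gauss : ∀ i, Measure.map (z i) P = gaussianReal 0 1)
    (Δν : ℕ → Ω → ℝ)
    (hΔν : ∀ i ω, Δν i ω = μ * (i : ℝ) ^ θ + σ * (i : ℝ) ^ lam * z i ω)
    (ν : ℕ → Ω → ℝ)
    (hν : ∀ n ω, ν n ω = ∑ i ∈ Finset.Icc 1 n, Δν i ω) :
    (∀ ω, ν 0 ω = 0) ∧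
    Tendsto (fun n : ℕ => ∫ ω, ν n ω ∂P) atTop atTop ∧
    Tendsto (fun n : ℕ => (P {ω | ν n ω < 0}).toReal) atTop (nhds 0) ∧
    Tendsto (fun n : ℕ => variance (Δν n) (P[|{ω | Δν n ω < 0}])) atTop (nhds 0) := by
  -- basic exponent facts
  have hθ' : -1 < θ := by linarith
  have htmin : -1 < min θ 0 := lt_min hθ' (by norm_num)
  have htle : min θ 0 ≤ 0 := min_le_right θ 0
  have ht1 : 0 < 1 + min θ 0 := by linarith
  -- Gaussian moments of the innovations
  set V : ℝ := ∫ x, x ^ 2 ∂(gaussianReal 0 1) with hV_def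
  have hVnn : 0 ≤ V := integral_nonneg fun x => sq_nonneg x
  have hzmem : ∀ i, MemLp (z i) 2 P := by
    intro i
    have h0 : MemLp (id : ℝ → ℝ) 2 (Measure.map (z i) P) := by
      rw [hz_gauss i]; exact gauss_memℒp2
    exact (memLp_map_measure_iff measurable_id.aestronglyMeasurable
      (hz_meas i).aemeasurable).mp h0
  have hzint : ∀ i, Integrable (z i) P := fun i => (hzmem i).integrable one_le_two
  have hzsq : ∀ i, Integrable (fun ω => z i ω ^ 2) P := fun i => (hzmem i).integrable_sq
  have hEz : ∀ i, ∫ ω, z i ω ∂P = 0 := by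
    intro i
    have h : ∫ y, y ∂(Measure.map (z i) P) = ∫ ω, z i ω ∂P :=
      integral_map (hz_meas i).aemeasurable measurable_id.aestronglyMeasurable
    rw [← h, hz_gauss i, gauss_mean]
  have hEz2 : ∀ i, ∫ ω, z i ω ^ 2 ∂P = V := by
    intro i
    have h : ∫ y, y ^ 2 ∂(Measure.map (z i) P) = ∫ ω, z i ω ^ 2 ∂P :=
      integral_map (hz_meas i).aemeasurable
        ((measurable_id.pow_const 2).aestronglyMeasurable)
    rw [← h, hz_gauss i]
  have hΔfun : ∀ i, Δν i = fun ω => μ * (i : ℝ) ^ θ + σ * (i : ℝ) ^ lam * z i ω :=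
    fun i => funext (hΔν i)
  have hmem : ∀ i, MemLp (Δν i) 2 P := by
    intro i
    rw [hΔfun i]
    exact MemLp.add (f := fun _ => μ * (i : ℝ) ^ θ) (g := fun ω => σ * (i : ℝ) ^ lam * z i ω)
      (memLp_const _) ((hzmem i).const_mul _)
  have hint : ∀ i, Integrable (Δν i) P := fun i => (hmem i).integrable one_le_two
  have hE : ∀ i, ∫ ω, Δν i ω ∂P = μ * (i : ℝ) ^ θ := by
    intro i
    simp only [hΔfun i]
    rw [integral_add (integrable_const _) ((hzint i).const_mul _), integral_const,
      integral_const_mul, hEz i]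
    simp
  have hVar : ∀ i, variance (Δν i) P = (σ * (i : ℝ) ^ lam) ^ 2 * V := by
    intro i
    rw [variance_eq_sub (hmem i), hE i]
    have hIsq : ∫ ω, (Δν i ^ 2) ω ∂P
        = ∫ ω, ((μ * (i : ℝ) ^ θ) ^ 2
          + (2 * (μ * (i : ℝ) ^ θ) * (σ * (i : ℝ) ^ lam)) * z i ω
          + (σ * (i : ℝ) ^ lam) ^ 2 * z i ω ^ 2) ∂P := by
      refine integral_congr_ae (Filter.Eventually.of_forall fun ω => ?_)
      simp only [Pi.pow_apply, hΔν i ω]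
      ring
    have i1 : Integrable (fun ω => (μ * (i : ℝ) ^ θ) ^ 2
        + (2 * (μ * (i : ℝ) ^ θ) * (σ * (i : ℝ) ^ lam)) * z i ω) P :=
      (integrable_const _).add ((hzint i).const_mul _)
    rw [hIsq, integral_add i1 ((hzsq i).const_mul _),
      integral_add (integrable_const _) ((hzint i).const_mul _), integral_const,
      integral_const_mul, integral_const_mul, hEz i, hEz2 i]
    simp
  -- part 1
  have part1 : ∀ ω, ν 0 ω = 0 := by
    intro ω; rw [hν]; simp
  -- expectations of cumulative profits
  have hEν : ∀ n, ∫ ω, ν n ω ∂P = ∑ i ∈ Finset.Icc 1 n, μ * (i : ℝ) ^ θ := by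
    intro n
    simp only [hν]
    rw [integral_finset_sum _ (fun i _ => hint i)]
    exact Finset.sum_congr rfl fun i _ => hE i
  have hlow : ∀ n : ℕ, 1 ≤ n →
      μ * (n : ℝ) ^ (1 + min θ 0) ≤ ∑ i ∈ Finset.Icc 1 n, μ * (i : ℝ) ^ θ := by
    intro n hn
    have hn0 : (0:ℝ) < n := by exact_mod_cast hn
    have each : ∀ i ∈ Finset.Icc 1 n, μ * (n : ℝ) ^ (min θ 0) ≤ μ * (i : ℝ) ^ θ := by
      intro i hi
      obtain ⟨h1i, hin⟩ := Finset.mem_Icc.mp hi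
      have h1i' : (1:ℝ) ≤ (i:ℝ) := by exact_mod_cast h1i
      have hin' : (i:ℝ) ≤ (n:ℝ) := by exact_mod_cast hin
      have s1 : (n:ℝ) ^ (min θ 0) ≤ (i:ℝ) ^ (min θ 0) :=
        Real.rpow_le_rpow_of_nonpos (by linarith) hin' htle
      have s2 : (i:ℝ) ^ (min θ 0) ≤ (i:ℝ) ^ θ :=
        Real.rpow_le_rpow_of_exponent_le h1i' (min_le_left θ 0)
      exact mul_le_mul_of_nonneg_left (le_trans s1 s2) hμ.le
    have hsum := Finset.card_nsmul_le_sum _ _ _ each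
    rw [Nat.card_Icc] at hsum
    simp only [Nat.add_sub_cancel, nsmul_eq_mul] at hsum
    have hrw : μ * (n : ℝ) ^ (1 + min θ 0) = (n:ℝ) * (μ * (n:ℝ) ^ (min θ 0)) := by
      rw [Real.rpow_add hn0, Real.rpow_one]; ring
    rw [hrw]
    exact hsum
  -- part 2
  have part2 : Tendsto (fun n : ℕ => ∫ ω, ν n ω ∂P) atTop atTop := by
    have hgrow : Tendsto (fun n : ℕ => μ * (n:ℝ) ^ (1 + min θ 0)) atTop atTop := by
      apply Tendsto.const_mul_atTop hμ
      exact (tendsto_rpow_atTop ht1).comp tendsto_natCast_atTop_atTop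
    refine tendsto_atTop_mono' atTop ?_ hgrow
    filter_upwards [eventually_ge_atTop 1] with n hn
    rw [hEν n]
    exact hlow n hn
  -- choose a comparison exponent p
  set p : ℝ := (max (2*lam) (-1) + min (2 * min θ 0 + 1) 0) / 2 with hp_def
  have hAB : max (2*lam) (-1) < min (2 * min θ 0 + 1) 0 := by
    apply max_lt <;> apply lt_min
    · rcases le_total θ 0 with h | h
      · rw [min_eq_left h]; linarith
      · rw [min_eq_right h]; linarith
    · linarith
    · linarith
    · norm_num
  have hp1 : -1 < p := by
    have := le_max_right (2*lam) (-1); rw [hp_def]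
    have h2 := hAB
    linarith [le_max_right (2*lam) (-1)]
  have hp0 : p < 0 := by
    have := min_le_right (2 * min θ 0 + 1) 0
    rw [hp_def]
    linarith [le_max_left (2*lam) (-1), min_le_right (2 * min θ 0 + 1) 0,
      le_max_right (2*lam) (-1)]
  have h2lp : 2*lam ≤ p := by
    rw [hp_def]
    linarith [le_max_left (2*lam) (-1)]
  have hpt : p + 1 < 2 * min θ 0 + 2 := by
    rw [hp_def]
    linarith [min_le_left (2 * min θ 0 + 1) 0, le_max_right (2*lam) (-1)]
  have hp1pos : 0 < p + 1 := by linarith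
  -- independence of increments
  have hiid : iIndepFun Δν P := by
    have h := hz_indep.comp (fun (i : ℕ) (x : ℝ) => μ * (i : ℝ) ^ θ + σ * (i : ℝ) ^ lam * x)
      (fun i => measurable_const.add ((measurable_id.const_mul _)))
    have heq : Δν
        = fun (i : ℕ) => (fun (x : ℝ) => μ * (i : ℝ) ^ θ + σ * (i : ℝ) ^ lam * x) ∘ z i :=
      funext fun i => funext fun ω => hΔν i ω
    rw [heq]
    exact h
  have hνsum : ∀ n, ν n = ∑ i ∈ Finset.Icc 1 n, Δν i := by
    intro n
    funext ω
    rw [hν, Finset.sum_apply]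
  have hVarν : ∀ n, variance (ν n) P = ∑ i ∈ Finset.Icc 1 n, (σ * (i : ℝ) ^ lam) ^ 2 * V := by
    intro n
    rw [hνsum n, IndepFun.variance_sum (fun i _ => hmem i)
      (fun i _ j _ hij => hiid.indepFun hij)]
    exact Finset.sum_congr rfl fun i _ => hVar i
  have hmemν : ∀ n, MemLp (ν n) 2 P := by
    intro n
    rw [hνsum n]
    exact memLp_finset_sum' _ (fun i _ => hmem i)
  -- set constants for part 3
  set e : ℝ := (2 + 2 * min θ 0) - (p + 1) with he_def
  have he : 0 < e := by rw [he_def]; linarith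
  set K : ℝ := σ^2 * V * (1 + 1/(p+1)) / μ^2 with hK_def
  have claim3 : ∀ n : ℕ, 1 ≤ n →
      (P {ω | ν n ω < 0}).toReal ≤ K * (n:ℝ) ^ (-e) := by
    intro n hn
    have hn0 : (0:ℝ) < n := by exact_mod_cast hn
    have hn1 : (1:ℝ) ≤ n := by exact_mod_cast hn
    have hMpos : 0 < ∑ i ∈ Finset.Icc 1 n, μ * (i : ℝ) ^ θ :=
      lt_of_lt_of_le (mul_pos hμ (Real.rpow_pos_of_pos hn0 _)) (hlow n hn)
    have hsub : {ω | ν n ω < 0}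
        ⊆ {ω | (∑ i ∈ Finset.Icc 1 n, μ * (i : ℝ) ^ θ) ≤ |ν n ω - ∫ x, ν n x ∂P|} := by
      intro ω hω
      simp only [Set.mem_setOf_eq] at hω ⊢
      rw [hEν n]
      exact le_abs.mpr (Or.inr (by linarith))
    have hcheb := meas_ge_le_variance_div_sq (hmemν n) hMpos
    have hchain := (measure_mono hsub).trans hcheb
    have h1 : (P {ω | ν n ω < 0}).toReal
        ≤ variance (ν n) P / (∑ i ∈ Finset.Icc 1 n, μ * (i : ℝ) ^ θ) ^ 2 := by
      have h2 := ENNReal.toReal_mono ENNReal.ofReal_ne_top hchain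
      rwa [ENNReal.toReal_ofReal
        (div_nonneg (variance_nonneg _ _) (sq_nonneg _))] at h2
    -- bound the variance
    have hVarn : variance (ν n) P = σ^2 * V * ∑ i ∈ Finset.Icc 1 n, (i:ℝ) ^ (2*lam) := by
      rw [hVarν n, Finset.mul_sum]
      refine Finset.sum_congr rfl fun i hi => ?_
      have hi1 : 1 ≤ i := (Finset.mem_Icc.mp hi).1
      have hi0 : (0:ℝ) < (i:ℝ) := by exact_mod_cast hi1
      have hpw : ((i:ℝ) ^ lam) ^ 2 = (i:ℝ) ^ (2*lam) := by
        rw [← Real.rpow_natCast ((i:ℝ) ^ lam) 2, ← Real.rpow_mul hi0.le]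
        norm_num [mul_comm]
      rw [mul_pow, hpw]
      ring
    have hS2 : ∑ i ∈ Finset.Icc 1 n, (i:ℝ) ^ (2*lam)
        ≤ (1 + 1/(p+1)) * (n:ℝ) ^ (p+1) := by
      have hs1 : ∑ i ∈ Finset.Icc 1 n, (i:ℝ) ^ (2*lam)
          ≤ ∑ i ∈ Finset.Icc 1 n, (i:ℝ) ^ p := by
        refine Finset.sum_le_sum fun i hi => ?_
        have hi1 : 1 ≤ i := (Finset.mem_Icc.mp hi).1
        have hi1' : (1:ℝ) ≤ (i:ℝ) := by exact_mod_cast hi1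
        exact Real.rpow_le_rpow_of_exponent_le hi1' h2lp
      have hs2 := sum_rpow_le hp1 hp0 hn
      have hone : (1:ℝ) ≤ (n:ℝ) ^ (p+1) :=
        calc (1:ℝ) = (1:ℝ) ^ (p+1) := (Real.one_rpow _).symm
          _ ≤ (n:ℝ) ^ (p+1) := Real.rpow_le_rpow zero_le_one hn1 hp1pos.le
      have : 1 + (n:ℝ) ^ (p+1) / (p+1) ≤ (1 + 1/(p+1)) * (n:ℝ) ^ (p+1) := by
        have hh : (1 + 1/(p+1)) * (n:ℝ) ^ (p+1)
            = (n:ℝ) ^ (p+1) + (n:ℝ) ^ (p+1) / (p+1) := by ring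
        rw [hh]
        linarith
      linarith
    have hVle : variance (ν n) P ≤ σ^2 * V * ((1 + 1/(p+1)) * (n:ℝ) ^ (p+1)) := by
      rw [hVarn]
      exact mul_le_mul_of_nonneg_left hS2 (mul_nonneg (sq_nonneg σ) hVnn)
    have hM2 : (μ * (n:ℝ) ^ (1 + min θ 0)) ^ 2
        ≤ (∑ i ∈ Finset.Icc 1 n, μ * (i : ℝ) ^ θ) ^ 2 := by
      apply pow_le_pow_left₀ (mul_pos hμ (Real.rpow_pos_of_pos hn0 _)).le (hlow n hn)
    have hratio : variance (ν n) P / (∑ i ∈ Finset.Icc 1 n, μ * (i : ℝ) ^ θ) ^ 2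
        ≤ (σ^2 * V * ((1 + 1/(p+1)) * (n:ℝ) ^ (p+1))) / (μ * (n:ℝ) ^ (1 + min θ 0)) ^ 2 :=
      div_le_div₀ (mul_nonneg (mul_nonneg (sq_nonneg σ) hVnn)
          (mul_nonneg (by positivity) (Real.rpow_pos_of_pos hn0 _).le)) hVle
        (pow_pos (mul_pos hμ (Real.rpow_pos_of_pos hn0 _)) 2) hM2
    have hpow2 : ((n:ℝ) ^ (1 + min θ 0)) ^ 2 = (n:ℝ) ^ (2 + 2 * min θ 0) := by
      rw [← Real.rpow_natCast ((n:ℝ) ^ (1 + min θ 0)) 2, ← Real.rpow_mul hn0.le]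
      congr 1
      push_cast
      ring
    have hdiv : (n:ℝ) ^ (p+1) / (n:ℝ) ^ (2 + 2 * min θ 0) = (n:ℝ) ^ (-e) := by
      rw [← Real.rpow_sub hn0]
      congr 1
      rw [he_def]
      ring
    have hfinal : (σ^2 * V * ((1 + 1/(p+1)) * (n:ℝ) ^ (p+1)))
        / (μ * (n:ℝ) ^ (1 + min θ 0)) ^ 2 = K * (n:ℝ) ^ (-e) := by
      rw [mul_pow, hpow2, hK_def, ← hdiv]
      have hne1 : (μ:ℝ)^2 ≠ 0 := (pow_pos hμ 2).ne'
      have hne2 : (n:ℝ) ^ (2 + 2 * min θ 0) ≠ 0 :=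
        (Real.rpow_pos_of_pos hn0 _).ne'
      field_simp
    calc (P {ω | ν n ω < 0}).toReal
        ≤ variance (ν n) P / (∑ i ∈ Finset.Icc 1 n, μ * (i : ℝ) ^ θ) ^ 2 := h1
      _ ≤ (σ^2 * V * ((1 + 1/(p+1)) * (n:ℝ) ^ (p+1)))
            / (μ * (n:ℝ) ^ (1 + min θ 0)) ^ 2 := hratio
      _ = K * (n:ℝ) ^ (-e) := hfinal
  have part3 : Tendsto (fun n : ℕ => (P {ω | ν n ω < 0}).toReal) atTop (nhds 0) := by
    have htendK : Tendsto (fun n : ℕ => K * (n:ℝ) ^ (-e)) atTop (nhds 0) := by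
      have h0 : Tendsto (fun n : ℕ => (n:ℝ) ^ (-e)) atTop (nhds 0) :=
        (tendsto_rpow_neg_atTop he).comp tendsto_natCast_atTop_atTop
      simpa using h0.const_mul K
    refine squeeze_zero' (Filter.Eventually.of_forall fun n => ENNReal.toReal_nonneg)
      ?_ htendK
    filter_upwards [eventually_ge_atTop 1] with n hn
    exact claim3 n hn
  -- part 4
  have claim4 : ∀ n : ℕ, 1 ≤ n →
      variance (Δν n) (P[|{ω | Δν n ω < 0}]) ≤ 3 * (σ * (n:ℝ) ^ lam) ^ 2 := by
    intro n hn
    have hn0 : (0:ℝ) < n := by exact_mod_cast hn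
    have ha : 0 < σ * (n:ℝ) ^ lam := mul_pos hσ (Real.rpow_pos_of_pos hn0 lam)
    have hb : 0 < μ * (n:ℝ) ^ θ := mul_pos hμ (Real.rpow_pos_of_pos hn0 θ)
    set c : ℝ := -(μ * (n:ℝ) ^ θ / (σ * (n:ℝ) ^ lam)) with hc_def
    have hc : c < 0 := by
      rw [hc_def]
      exact neg_lt_zero.mpr (div_pos hb ha)
    have hac : (σ * (n:ℝ) ^ lam) * c = -(μ * (n:ℝ) ^ θ) := by
      rw [hc_def]
      field_simp
    have hset : {ω | Δν n ω < 0} = z n ⁻¹' (Iio c) := by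
      ext ω
      simp only [Set.mem_setOf_eq, Set.mem_preimage, Set.mem_Iio]
      rw [hΔν n ω]
      constructor
      · intro h
        have h2 : (σ * (n:ℝ) ^ lam) * z n ω < (σ * (n:ℝ) ^ lam) * c := by
          rw [hac]; linarith
        exact (mul_lt_mul_iff_right₀ ha).mp h2
      · intro h
        have h2 := (mul_lt_mul_iff_right₀ ha).mpr h
        rw [hac] at h2
        linarith
    have hPA : P {ω | Δν n ω < 0} = (gaussianReal 0 1) (Iio c) := by
      rw [hset, ← hz_gauss n, Measure.map_apply (hz_meas n) measurableSet_Iio]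
    have hγval : (gaussianReal 0 1) (Iio c)
        = ENNReal.ofReal (∫ x in Iio c, gaussianPDFReal 0 1 x) :=
      gaussianReal_apply_eq_integral 0 one_ne_zero _
    have hγpos := gauss_measure_Iio_pos c
    have hPA0 : P {ω | Δν n ω < 0} ≠ 0 := by
      rw [hPA, hγval]
      simp only [ne_eq, ENNReal.ofReal_eq_zero, not_le]
      exact hγpos
    haveI hQprob : IsProbabilityMeasure (P[|{ω | Δν n ω < 0}]) :=
      cond_isProbabilityMeasure hPA0
    have hcondrw : (P[|{ω | Δν n ω < 0}])
        = (P {ω | Δν n ω < 0})⁻¹ • P.restrict {ω | Δν n ω < 0} := rfl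
    have hmemQ : MemLp (Δν n) 2 (P[|{ω | Δν n ω < 0}]) := by
      rw [hcondrw]
      exact ((hmem n).restrict _).smul_measure (ENNReal.inv_ne_top.mpr hPA0)
    have hvarle : variance (Δν n) (P[|{ω | Δν n ω < 0}])
        ≤ ∫ ω, (Δν n ^ 2) ω ∂(P[|{ω | Δν n ω < 0}]) := by
      rw [variance_eq_sub hmemQ]
      exact sub_le_self _ (sq_nonneg _)
    have hsqrw : (Δν n ^ 2 : Ω → ℝ)
        = fun ω => (σ * (n:ℝ) ^ lam) ^ 2 * (z n ω - c) ^ 2 := by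
      funext ω
      simp only [Pi.pow_apply, hΔν n ω]
      have : μ * (n:ℝ) ^ θ = -((σ * (n:ℝ) ^ lam) * c) := by linarith [hac]
      rw [this]
      ring
    have hIioInt : ∫ ω, (Δν n ^ 2) ω ∂(P[|{ω | Δν n ω < 0}])
        = (P {ω | Δν n ω < 0})⁻¹.toReal
          * ((σ * (n:ℝ) ^ lam) ^ 2 * ∫ x in Iio c, (x - c) ^ 2 ∂(gaussianReal 0 1)) := by
      rw [hcondrw, integral_smul_measure, smul_eq_mul]
      congr 1
      rw [hsqrw, integral_const_mul]
      congr 1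
      rw [hset, ← hz_gauss n,
        setIntegral_map measurableSet_Iio
          (((measurable_id'.sub_const c).pow_const 2).aestronglyMeasurable)
          (hz_meas n).aemeasurable]
    have hIioBound : ∫ x in Iio c, (x - c) ^ 2 ∂(gaussianReal 0 1)
        ≤ 3 * (∫ x in Iio c, gaussianPDFReal 0 1 x) := by
      rw [gauss_setInt _ _ measurableSet_Iio]
      exact tail_bound hc.le
    have hwval : (P {ω | Δν n ω < 0}).toReal = ∫ x in Iio c, gaussianPDFReal 0 1 x := by
      rw [hPA, hγval, ENNReal.toReal_ofReal hγpos.le]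
    have hinv : (P {ω | Δν n ω < 0})⁻¹.toReal
        = (∫ x in Iio c, gaussianPDFReal 0 1 x)⁻¹ := by
      rw [ENNReal.toReal_inv, hwval]
    calc variance (Δν n) (P[|{ω | Δν n ω < 0}])
        ≤ ∫ ω, (Δν n ^ 2) ω ∂(P[|{ω | Δν n ω < 0}]) := hvarle
      _ = (P {ω | Δν n ω < 0})⁻¹.toReal
          * ((σ * (n:ℝ) ^ lam) ^ 2 * ∫ x in Iio c, (x - c) ^ 2 ∂(gaussianReal 0 1)) :=
          hIioInt
      _ ≤ (P {ω | Δν n ω < 0})⁻¹.toReal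
          * ((σ * (n:ℝ) ^ lam) ^ 2 * (3 * ∫ x in Iio c, gaussianPDFReal 0 1 x)) := by
          apply mul_le_mul_of_nonneg_left _ ENNReal.toReal_nonneg
          exact mul_le_mul_of_nonneg_left hIioBound (by positivity)
      _ = 3 * (σ * (n:ℝ) ^ lam) ^ 2 := by
          rw [hinv]
          field_simp
  have part4 : Tendsto (fun n : ℕ => variance (Δν n) (P[|{ω | Δν n ω < 0}]))
      atTop (nhds 0) := by
    have h0 : Tendsto (fun n : ℕ => (n:ℝ) ^ lam) atTop (nhds 0) := by
      have h := (tendsto_rpow_neg_atTop (neg_pos.mpr hlam)).comp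
        tendsto_natCast_atTop_atTop
      simpa [Function.comp_def] using h
    have htend : Tendsto (fun n : ℕ => 3 * (σ * (n:ℝ) ^ lam) ^ 2) atTop (nhds 0) := by
      have := (((h0.const_mul σ).pow 2).const_mul 3)
      simpa using this
    refine squeeze_zero' (Filter.Eventually.of_forall fun n => variance_nonneg _ _)
      ?_ htend
    filter_upwards [eventually_ge_atTop 1] with n hn
    exact claim4 n hn
  exact ⟨part1, part2, part3, part4⟩
end
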